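/- arXiv:2110.00739 — 7 statements merged into one kernel-verified Lean document; each statement's English description precedes it below -/
import Mathlib

section
/- Let θ : [0,∞) → ℝ be defined by θ(x) = sin x for 0 ≤ x < 3π/4 and θ(x) = (e^{3π/4}/√2)·e^{−x} for x ≥ 3π/4, and let f : ℝ → ℝ be the odd extension of θ (i.e. f(x) = θ(x) for x ≥ 0 and f(x) = −θ(−x) for x < 0). Then f is continuously differentiable on ℝ, f is square-integrable on ℝ, f is not identically zero, and for every x ∈ ℝ with |x| ≠ 3π/4 the function f is four times differentiable at x with f''''(x) = f(x). -/
open Real MeasureTheory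

/-- The function `θ` from the paper: `sin x` on `[0, 3π/4)` and
`(e^{3π/4}/√2) e^{-x}` on `[3π/4, ∞)` (its values for `x < 0` are irrelevant,
only `x ≥ 0` is used via the odd extension). -/
noncomputable def theta (x : ℝ) : ℝ :=
  if x < 3 * π / 4 then Real.sin x
  else (Real.exp (3 * π / 4) / Real.sqrt 2) * Real.exp (-x)

/-- The odd extension `f` of `θ` to all of `ℝ`. -/
noncomputable def fOdd (x : ℝ) : ℝ :=
  if 0 ≤ x then theta x else -theta (-x)

open Set Filter Topology

lemma hAe : Real.exp (3*π/4) / Real.sqrt 2 * Real.exp (-(3*π/4)) = Real.sqrt 2 / 2 := by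
  have h2 : Real.sqrt 2 * Real.sqrt 2 = 2 := Real.mul_self_sqrt (by norm_num)
  have h0 : Real.sqrt 2 ≠ 0 := by positivity
  rw [div_mul_eq_mul_div, ← Real.exp_add, add_neg_cancel, Real.exp_zero]
  rw [div_eq_div_iff h0 (by norm_num)]
  linarith

lemma hsin : Real.sin (3*π/4) = Real.sqrt 2 / 2 := by
  have h : (3*π/4 : ℝ) = π - π/4 := by ring
  rw [h, Real.sin_pi_sub, Real.sin_pi_div_four]

lemma hcos : Real.cos (3*π/4) = -(Real.sqrt 2 / 2) := by
  have h : (3*π/4 : ℝ) = π - π/4 := by ring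
  rw [h, Real.cos_pi_sub, Real.cos_pi_div_four]

lemma hq : (0:ℝ) < 3*π/4 := by positivity

lemma fOdd_eq_sin {x : ℝ} (h1 : -(3*π/4) < x) (h2 : x < 3*π/4) : fOdd x = Real.sin x := by
  unfold fOdd theta
  rcases le_or_gt 0 x with hx | hx
  · rw [if_pos hx, if_pos (by rw [mul_comm] at h2 ⊢; linarith)]
  · rw [if_neg (not_le.2 hx), if_pos (by linarith), Real.sin_neg, neg_neg]

lemma fOdd_eq_exp {x : ℝ} (h : 3*π/4 ≤ x) :
    fOdd x = Real.exp (3*π/4) / Real.sqrt 2 * Real.exp (-x) := by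
  have hx : (0:ℝ) ≤ x := le_trans hq.le h
  unfold fOdd theta
  rw [if_pos hx, if_neg (by rw [not_lt]; linarith)]

lemma fOdd_eq_nexp {x : ℝ} (h : x ≤ -(3*π/4)) :
    fOdd x = -(Real.exp (3*π/4) / Real.sqrt 2 * Real.exp x) := by
  have hx : ¬ (0 ≤ x) := by have := hq; push_neg; linarith
  unfold fOdd theta
  rw [if_neg hx, if_neg (by rw [not_lt]; linarith), neg_neg]

lemma hasDerivAt_cexp (c x : ℝ) :
    HasDerivAt (fun y => c * Real.exp (-y)) (-(c * Real.exp (-x))) x := by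
  have h := ((Real.hasDerivAt_exp (-x)).comp x (hasDerivAt_neg x)).const_mul c
  exact h.congr_deriv (by ring)

lemma hasDerivAt_nexp (c x : ℝ) :
    HasDerivAt (fun y => -(c * Real.exp y)) (-(c * Real.exp x)) x :=
  ((Real.hasDerivAt_exp x).const_mul c).neg

lemma mderiv_cexp (c : ℝ) :
    deriv (fun y => c * Real.exp (-y)) = fun y => (-c) * Real.exp (-y) :=
  funext fun x => by rw [(hasDerivAt_cexp c x).deriv]; ring

lemma mderiv_nexp (c : ℝ) :
    deriv (fun y => -(c * Real.exp y)) = fun y => -(c * Real.exp y) :=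
  funext fun x => (hasDerivAt_nexp c x).deriv

lemma iter4_cexp (c x : ℝ) :
    iteratedDeriv 4 (fun y => c * Real.exp (-y)) x = c * Real.exp (-x) := by
  simp only [iteratedDeriv_succ, iteratedDeriv_zero, mderiv_cexp]
  ring_nf

lemma iter4_nexp (c x : ℝ) :
    iteratedDeriv 4 (fun y => -(c * Real.exp y)) x = -(c * Real.exp x) := by
  simp only [iteratedDeriv_succ, iteratedDeriv_zero, mderiv_nexp]

lemma iter4_sin (x : ℝ) : iteratedDeriv 4 Real.sin x = Real.sin x := by
  have h1 : deriv Real.sin = Real.cos := Real.deriv_sin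
  have h2 : deriv Real.cos = fun y => -Real.sin y := Real.deriv_cos'
  have h3 : deriv (fun y => -Real.sin y) = fun y => -Real.cos y := by
    funext y; rw [deriv.fun_neg, Real.deriv_sin]
  have h4 : deriv (fun y => -Real.cos y) = fun y => Real.sin y := by
    funext y; rw [deriv.fun_neg, Real.deriv_cos]; ring
  simp only [iteratedDeriv_succ, iteratedDeriv_zero, h1, h2, h3, h4]

/-- The (continuous) derivative of `fOdd`. -/
noncomputable def Fd (x : ℝ) : ℝ :=
  if x ≤ -(3*π/4) then -(Real.exp (3*π/4) / Real.sqrt 2 * Real.exp x)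
  else if 3*π/4 ≤ x then -(Real.exp (3*π/4) / Real.sqrt 2 * Real.exp (-x))
  else Real.cos x

lemma contFd : Continuous Fd := by
  unfold Fd
  have hinner : Continuous (fun x : ℝ =>
      if 3*π/4 ≤ x then -(Real.exp (3*π/4) / Real.sqrt 2 * Real.exp (-x)) else Real.cos x) := by
    apply Continuous.if_le
    · exact (continuous_const.mul (Real.continuous_exp.comp continuous_neg)).neg
    · exact Real.continuous_cos
    · exact continuous_const
    · exact continuous_id
    · intro x hx
      rw [← hx, hAe, hcos]
  apply Continuous.if_le
  · exact (continuous_const.mul Real.continuous_exp).neg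
  · exact hinner
  · exact continuous_id
  · exact continuous_const
  · intro x hx
    rw [hx, if_neg (by have := hq; push_neg; linarith)]
    rw [Real.cos_neg, hcos, hAe]

lemma hasDerivAt_fOdd (x : ℝ) : HasDerivAt fOdd (Fd x) x := by
  rcases lt_trichotomy x (-(3*π/4)) with h | h | h
  · rw [Fd, if_pos h.le]
    refine (hasDerivAt_nexp _ x).congr_of_eventuallyEq ?_
    filter_upwards [Iio_mem_nhds h] with y hy
    exact fOdd_eq_nexp (le_of_lt hy)
  · -- x = -(3π/4)
    subst h
    have hFd : Fd (-(3*π/4)) = -(Real.sqrt 2 / 2) := by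
      rw [Fd, if_pos le_rfl, hAe]
    rw [hFd]
    have hl : HasDerivWithinAt fOdd (-(Real.sqrt 2 / 2)) (Iic (-(3*π/4))) (-(3*π/4)) := by
      have := ((hasDerivAt_nexp (Real.exp (3*π/4) / Real.sqrt 2) (-(3*π/4))).hasDerivWithinAt
        (s := Iic (-(3*π/4)))).congr (fun y hy => fOdd_eq_nexp hy)
        (fOdd_eq_nexp le_rfl)
      rwa [hAe] at this
    have hr : HasDerivWithinAt fOdd (-(Real.sqrt 2 / 2)) (Ici (-(3*π/4))) (-(3*π/4)) := by
      have hs : HasDerivWithinAt Real.sin (Real.cos (-(3*π/4))) (Ici (-(3*π/4))) (-(3*π/4)) :=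
        (Real.hasDerivAt_sin _).hasDerivWithinAt
      have hx2 : Real.cos (-(3*π/4)) = -(Real.sqrt 2/2) := by rw [Real.cos_neg, hcos]
      rw [hx2] at hs
      refine hs.congr_of_eventuallyEq ?_ ?_
      · have hmem : Iio (3*π/4) ∈ 𝓝[Ici (-(3*π/4))] (-(3*π/4)) :=
          nhdsWithin_le_nhds (Iio_mem_nhds (by have := hq; linarith))
        filter_upwards [hmem, self_mem_nhdsWithin] with y hy1 (hy2 : -(3*π/4) ≤ y)
        rcases lt_or_eq_of_le hy2 with hy3 | hy3
        · exact fOdd_eq_sin hy3 hy1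
        · rw [← hy3, fOdd_eq_nexp le_rfl, hAe, Real.sin_neg, hsin]
      · rw [fOdd_eq_nexp le_rfl, hAe, Real.sin_neg, hsin]
    exact (hl.union hr).hasDerivAt (by rw [Iic_union_Ici]; exact univ_mem)
  · rcases lt_trichotomy x (3*π/4) with h2 | h2 | h2
    · rw [Fd, if_neg (not_le.2 h), if_neg (not_le.2 h2)]
      refine (Real.hasDerivAt_sin x).congr_of_eventuallyEq ?_
      filter_upwards [Ioo_mem_nhds h h2] with y hy
      exact fOdd_eq_sin hy.1 hy.2
    · -- x = 3π/4
      subst h2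
      have hFd : Fd (3*π/4) = -(Real.sqrt 2 / 2) := by
        rw [Fd, if_neg (not_le.2 h), if_pos le_rfl, hAe]
      rw [hFd]
      have hr : HasDerivWithinAt fOdd (-(Real.sqrt 2 / 2)) (Ici (3*π/4)) (3*π/4) := by
        have := ((hasDerivAt_cexp (Real.exp (3*π/4) / Real.sqrt 2) (3*π/4)).hasDerivWithinAt
          (s := Ici (3*π/4))).congr (fun y hy => fOdd_eq_exp hy)
          (fOdd_eq_exp le_rfl)
        rwa [hAe] at this
      have hl : HasDerivWithinAt fOdd (-(Real.sqrt 2 / 2)) (Iic (3*π/4)) (3*π/4) := by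
        have hs : HasDerivWithinAt Real.sin (Real.cos (3*π/4)) (Iic (3*π/4)) (3*π/4) :=
          (Real.hasDerivAt_sin _).hasDerivWithinAt
        rw [hcos] at hs
        refine hs.congr_of_eventuallyEq ?_ ?_
        · have hmem : Ioi (-(3*π/4)) ∈ 𝓝[Iic (3*π/4)] (3*π/4) :=
            nhdsWithin_le_nhds (Ioi_mem_nhds (by have := hq; linarith))
          filter_upwards [hmem, self_mem_nhdsWithin] with y hy1 (hy2 : y ≤ 3*π/4)
          rcases lt_or_eq_of_le hy2 with hy3 | hy3
          · exact fOdd_eq_sin hy1 hy3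
          · rw [hy3, fOdd_eq_exp le_rfl, hAe, hsin]
        · rw [fOdd_eq_exp le_rfl, hAe, hsin]
      exact (hl.union hr).hasDerivAt (by rw [Iic_union_Ici]; exact univ_mem)
    · rw [Fd, if_neg (not_le.2 h), if_pos h2.le]
      refine (hasDerivAt_cexp _ x).congr_of_eventuallyEq ?_
      filter_upwards [Ioi_mem_nhds h2] with y hy
      exact fOdd_eq_exp (le_of_lt hy)

lemma contDiff_fOdd : ContDiff ℝ 1 fOdd := by
  rw [contDiff_one_iff_deriv]
  refine ⟨fun x => (hasDerivAt_fOdd x).differentiableAt, ?_⟩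
  have : deriv fOdd = Fd := funext fun x => (hasDerivAt_fOdd x).deriv
  rw [this]
  exact contFd

lemma fOdd_neg_arg (x : ℝ) : fOdd (-x) = -fOdd x := by
  unfold fOdd
  rcases lt_trichotomy x 0 with h | h | h
  · rw [if_pos (by linarith), if_neg (not_le.2 h), neg_neg]
  · subst h
    have h0 : theta 0 = 0 := by unfold theta; rw [if_pos hq]; exact Real.sin_zero
    norm_num [h0]
  · rw [if_neg (by push_neg; linarith), if_pos h.le, neg_neg]

lemma fOdd_sq_bound (x : ℝ) :
    fOdd x ^ 2 ≤ Real.exp (3*π/2) * Real.exp (-(2*|x|)) := by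
  have key : ∀ y : ℝ, 0 ≤ y → fOdd y ^ 2 ≤ Real.exp (3*π/2) * Real.exp (-(2*y)) := by
    intro y hy
    rcases lt_or_ge y (3*π/4) with h | h
    · rw [fOdd_eq_sin (by have := hq; linarith) h]
      have h1 : Real.sin y ^ 2 ≤ 1 := Real.sin_sq_le_one y
      have h2 : (1:ℝ) ≤ Real.exp (3*π/2) * Real.exp (-(2*y)) := by
        rw [← Real.exp_add]
        exact Real.one_le_exp (by linarith)
      linarith
    · rw [fOdd_eq_exp h]
      have hE : Real.exp (-y) ^ 2 = Real.exp (-(2*y)) := by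
        rw [sq, ← Real.exp_add]; ring_nf
      have hA2 : (Real.exp (3*π/4)) ^ 2 = Real.exp (3*π/2) := by
        rw [sq, ← Real.exp_add]; ring_nf
      rw [mul_pow, div_pow, Real.sq_sqrt (by norm_num : (0:ℝ) ≤ 2), hE, hA2]
      have hEpos : 0 < Real.exp (-(2*y)) := Real.exp_pos _
      have hApos : 0 < Real.exp (3*π/2) := Real.exp_pos _
      nlinarith
  rcases le_or_gt 0 x with hx | hx
  · rw [abs_of_nonneg hx]; exact key x hx
  · have h1 : fOdd x ^ 2 = fOdd (-x) ^ 2 := by rw [fOdd_neg_arg]; ring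
    rw [abs_of_neg hx, h1]
    exact key (-x) (by linarith)

lemma integrable_exp_two_abs : Integrable (fun x : ℝ => Real.exp (-(2*|x|))) := by
  rw [← integrableOn_univ, ← Iic_union_Ioi (a := (0:ℝ))]
  apply IntegrableOn.union
  · apply Integrable.mono' (integrableOn_exp_Iic 0)
    · exact (Real.continuous_exp.comp
        ((continuous_const.mul continuous_abs).neg)).aestronglyMeasurable.restrict
    · filter_upwards [ae_restrict_mem measurableSet_Iic] with y (hy : y ≤ 0)
      rw [Real.norm_eq_abs, abs_of_pos (Real.exp_pos _)]
      apply Real.exp_le_exp.2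
      rw [abs_of_nonpos hy]; linarith
  · apply ((exp_neg_integrableOn_Ioi 0 two_pos).congr_fun ?_ measurableSet_Ioi)
    intro y hy
    simp only []
    rw [abs_of_pos hy]; ring_nf

lemma memLp_fOdd : MemLp fOdd 2 volume := by
  have hc : Continuous fOdd := contDiff_fOdd.continuous
  refine (memLp_two_iff_integrable_sq hc.aestronglyMeasurable).2 ?_
  refine Integrable.mono' (integrable_exp_two_abs.const_mul (Real.exp (3*π/2))) ?_ ?_
  · exact (hc.pow 2).aestronglyMeasurable
  · refine Eventually.of_forall fun x => ?_
    rw [Real.norm_eq_abs, abs_of_nonneg (sq_nonneg _)]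
    exact fOdd_sq_bound x

lemma part4 {g : ℝ → ℝ} {x : ℝ} (hg : ContDiff ℝ (⊤ : ℕ∞) g) (hev : fOdd =ᶠ[𝓝 x] g)
    (h4 : iteratedDeriv 4 g x = g x) :
    (∀ k ≤ 3, DifferentiableAt ℝ (iteratedDeriv k fOdd) x) ∧
      iteratedDeriv 4 fOdd x = fOdd x := by
  have hk : ∀ k : ℕ, iteratedDeriv k fOdd =ᶠ[𝓝 x] iteratedDeriv k g := by
    intro k; induction k with
    | zero => simpa [iteratedDeriv_zero] using hev
    | succ n ih => simpa only [iteratedDeriv_succ] using ih.deriv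
  constructor
  · intro k _
    exact ((hk k).differentiableAt_iff).2
      ((hg.differentiable_iteratedDeriv k (by exact_mod_cast ENat.coe_lt_top k)).differentiableAt)
  · rw [(hk 4).eq_of_nhds, h4, ← hev.eq_of_nhds]

theorem stmt_0 :
    ContDiff ℝ 1 fOdd ∧
    MemLp fOdd 2 volume ∧
    fOdd ≠ 0 ∧
    ∀ x : ℝ, |x| ≠ 3 * π / 4 →
      (∀ k ≤ 3, DifferentiableAt ℝ (iteratedDeriv k fOdd) x) ∧
      iteratedDeriv 4 fOdd x = fOdd x := by
  refine ⟨contDiff_fOdd, memLp_fOdd, ?_, ?_⟩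
  · intro h
    have h1 : fOdd (π/2) = 1 := by
      rw [fOdd_eq_sin (by nlinarith [Real.pi_pos]) (by nlinarith [Real.pi_pos]),
        Real.sin_pi_div_two]
    rw [h] at h1
    simp at h1
  · intro x hx
    have hx' : x ≠ 3*π/4 ∧ x ≠ -(3*π/4) := by
      constructor
      · intro h; apply hx; rw [h, abs_of_pos hq]
      · intro h; apply hx; rw [h, abs_neg, abs_of_pos hq]
    rcases lt_trichotomy x (-(3*π/4)) with h | h | h
    · refine part4 ((contDiff_const.mul Real.contDiff_exp).neg) ?_ (iter4_nexp (Real.exp (3*π/4) / Real.sqrt 2) x)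
      filter_upwards [Iio_mem_nhds h] with y hy
      exact fOdd_eq_nexp (le_of_lt hy)
    · exact absurd h hx'.2
    · rcases lt_trichotomy x (3*π/4) with h2 | h2 | h2
      · refine part4 Real.contDiff_sin ?_ (iter4_sin x)
        filter_upwards [Ioo_mem_nhds h h2] with y hy
        exact fOdd_eq_sin hy.1 hy.2
      · exact absurd h2 hx'.1
      · refine part4 (contDiff_const.mul (Real.contDiff_exp.comp contDiff_neg)) ?_
          (iter4_cexp (Real.exp (3*π/4) / Real.sqrt 2) x)
        filter_upwards [Ioi_mem_nhds h2] with y hy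
        exact fOdd_eq_exp (le_of_lt hy)
end

section
/- (Proposition 1) Let a ∈ ℝ and let α₀ > 0, α₁ > 0, α₂ > 0, α₃ > 0 be given. Then there exist real numbers b > a, A > 0, B > 0, a point ζ > b, and a function u : [a,∞) → ℝ which is three times continuously differentiable on [a,∞), four times differentiable on (a,b) ∪ (b,∞), such that u''''(x) = −A·u(x) for all x ∈ (a,b), u''''(x) = B·u(x) for all x ∈ (b,∞), u(a) = α₀, u'(a) = α₁, u''(a) = α₂, u'''(a) = α₃, and u'(ζ) = u'''(ζ) = 0. -/
/-!
Rescaling `t = (x - a) / ε`, the equation on `[a, b)` with `A = 4 / ε⁴` becomes `y'''' = -4 y`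
with initial jet `(α₀, ε α₁, ε² α₂, ε³ α₃)`. As `ε → 0` the solution tends to `α₀ cosh t cos t`,
whose jet at `t = π / 4` has the signs `(+, -, -, -)`; so does the jet of `u` at
`b = a + ε π / 4` for small `ε`.

On `[b, ∞)` take `B = 1 / δ⁴`. After rescaling by `δ`, the solution of `y'''' = y` with that jet
is `P eᵗ + Q e⁻ᵗ + Re (C eⁱᵗ)`, and `y'` and `y'''` vanish together at `θ` exactly when
`P e^θ = Q e^{-θ}` and `Im (C e^{iθ}) = 0`. The second equation is solved by an explicit
`θ(δ) ∈ (π/2, 3π/2)` (an arctangent); with it, the first one holds with `>` at `δ = 0` and with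
`<` at a `δ` where `P < 0 < Q`, so the intermediate value theorem gives a root. Gluing the two
solutions, whose jets agree at `b`, gives `u ∈ C³`, and `ζ = b + δ θ`.
-/

open Real Set

noncomputable def glue {E : Type*} (b : ℝ) (f g : ℝ → E) (x : ℝ) : E := if x ≤ b then f x else g x

theorem glue_eventuallyEq_left {E : Type*} {b x : ℝ} (f g : ℝ → E) (hx : x < b) :
    glue b f g =ᶠ[nhds x] f := by
  filter_upwards [Iio_mem_nhds hx] with y hy
  exact if_pos hy.le

theorem glue_eventuallyEq_right {E : Type*} {b x : ℝ} (f g : ℝ → E) (hx : b < x) :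
    glue b f g =ᶠ[nhds x] g := by
  filter_upwards [Ioi_mem_nhds hx] with y hy
  exact if_neg (not_le.2 hy)

theorem continuous_glue {E : Type*} [TopologicalSpace E] {b : ℝ} {f g : ℝ → E}
    (hf : Continuous f) (hg : Continuous g) (hfg : f b = g b) : Continuous (glue b f g) :=
  Continuous.if_le hf hg continuous_id continuous_const fun _ hx => hx ▸ hfg

section Derivatives

variable {E : Type*} [NormedAddCommGroup E] [NormedSpace ℝ E]

theorem hasDerivAt_glue {b : ℝ} {f g f' g' : ℝ → E} (hf : ∀ x, HasDerivAt f (f' x) x)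
    (hg : ∀ x, HasDerivAt g (g' x) x) (h₀ : f b = g b) (h₁ : f' b = g' b) (x : ℝ) :
    HasDerivAt (glue b f g) (glue b f' g' x) x := by
  rcases lt_trichotomy x b with hx | rfl | hx
  · rw [glue, if_pos hx.le]
    exact (hf x).congr_of_eventuallyEq (glue_eventuallyEq_left f g hx)
  · have hle : HasDerivWithinAt (glue x f g) (f' x) (Iic x) x :=
      (hf x).hasDerivWithinAt.congr (fun y hy => if_pos hy) (if_pos le_rfl)
    have hge : HasDerivWithinAt (glue x f g) (f' x) (Ici x) x := by
      refine h₁ ▸ (hg x).hasDerivWithinAt.congr (fun y hy => ?_) (by simp [glue, h₀])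
      rcases (mem_Ici.1 hy).eq_or_lt with rfl | hy
      · simp [glue, h₀]
      · exact if_neg (not_le.2 hy)
    rw [glue, if_pos le_rfl]
    simpa using (hle.union hge).hasDerivAt (by simp)
  · rw [glue, if_neg (not_le.2 hx)]
    exact (hg x).congr_of_eventuallyEq (glue_eventuallyEq_right f g hx)

theorem contDiff_glue {n : ℕ} {b : ℝ} {f g : ℝ → E} (hf : ContDiff ℝ n f) (hg : ContDiff ℝ n g)
    (hfg : ∀ k ≤ n, iteratedDeriv k f b = iteratedDeriv k g b) : ContDiff ℝ n (glue b f g) := by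
  induction n generalizing f g with
  | zero => exact contDiff_zero.2 (continuous_glue hf.continuous hg.continuous (hfg 0 le_rfl))
  | succ n ih =>
    rw [Nat.cast_succ, contDiff_succ_iff_deriv] at hf hg ⊢
    have hderiv : ∀ x, HasDerivAt (glue b f g) (glue b (deriv f) (deriv g) x) x :=
      hasDerivAt_glue (fun x => (hf.1 x).hasDerivAt) (fun x => (hg.1 x).hasDerivAt)
        (hfg 0 (Nat.zero_le _)) (by simpa using hfg 1 (by omega))
    refine ⟨fun x => (hderiv x).differentiableAt, by simp, ?_⟩
    rw [funext fun x => (hderiv x).deriv]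
    exact ih hf.2.2 hg.2.2 fun k hk => by
      simpa only [← iteratedDeriv_succ'] using hfg (k + 1) (by omega)

end Derivatives

theorem iteratedDerivWithin_eq_of_eventuallyEq {𝕜 F : Type*} [NontriviallyNormedField 𝕜]
    [NormedAddCommGroup F] [NormedSpace 𝕜 F] {u f : 𝕜 → F} {s : Set 𝕜} {x : 𝕜} {k : ℕ}
    (hs : UniqueDiffOn 𝕜 s) (hx : x ∈ s) (hf : ContDiff 𝕜 k f) (huf : u =ᶠ[nhds x] f) :
    iteratedDerivWithin k u s x = iteratedDeriv k f x := by
  rw [iteratedDerivWithin_eq_iteratedDeriv hs (hf.contDiffAt.congr_of_eventuallyEq huf) hx,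
    huf.iteratedDeriv_eq]

theorem differentiableWithinAt_iteratedDerivWithin_of_eventuallyEq {𝕜 F : Type*}
    [NontriviallyNormedField 𝕜] [NormedAddCommGroup F] [NormedSpace 𝕜 F] {u f : 𝕜 → F}
    {s : Set 𝕜} {x : 𝕜} {k : ℕ} (hs : UniqueDiffOn 𝕜 s) (hx : x ∈ s) (hf : ContDiff 𝕜 (k + 1) f)
    (huf : u =ᶠ[nhds x] f) : DifferentiableWithinAt 𝕜 (iteratedDerivWithin k u s) s x :=
  ContDiffWithinAt.differentiableWithinAt_iteratedDerivWithin
    (hf.contDiffAt.congr_of_eventuallyEq huf).contDiffWithinAt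
    (by exact_mod_cast Nat.lt_succ_self k) (by rwa [insert_eq_of_mem hx])

noncomputable def expSum {ι : Type*} [Fintype ι] (ω c : ι → ℂ) (x₀ x : ℝ) : ℝ :=
  (∑ j, c j * Complex.exp (ω j * (x - x₀))).re

section ExpSum

variable {ι : Type*} [Fintype ι] (ω c : ι → ℂ) (x₀ : ℝ)

theorem hasDerivAt_expSum (x : ℝ) :
    HasDerivAt (expSum ω c x₀) (expSum ω (c * ω) x₀ x) x := by
  have h : HasDerivAt (fun z : ℂ => ∑ j, c j * Complex.exp (ω j * (z - x₀)))
      (∑ j, c j * ω j * Complex.exp (ω j * (x - x₀))) x := by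
    refine HasDerivAt.fun_sum fun j _ => ?_
    have := (((hasDerivAt_id (x : ℂ)).sub_const (x₀ : ℂ)).const_mul (ω j)).cexp.const_mul (c j)
    simpa [mul_comm, mul_left_comm, mul_assoc] using this
  unfold expSum
  simp only [Pi.mul_apply]
  exact h.real_of_complex

theorem contDiff_expSum {n : WithTop ℕ∞} : ContDiff ℝ n (expSum ω c x₀) := by
  have hofReal : ContDiff ℝ n ((↑) : ℝ → ℂ) := Complex.ofRealCLM.contDiff
  exact Complex.reCLM.contDiff.comp (by fun_prop)

theorem iteratedDeriv_expSum (n : ℕ) :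
    iteratedDeriv n (expSum ω c x₀) = expSum ω (c * ω ^ n) x₀ := by
  induction n with
  | zero => simp
  | succ n ih =>
    rw [iteratedDeriv_succ, ih, pow_succ, ← mul_assoc]
    exact funext fun x => (hasDerivAt_expSum ω _ x₀ x).deriv

theorem expSum_self : expSum ω c x₀ x₀ = (∑ j, c j).re := by
  simp [expSum]

theorem expSum_mul_pow_four {κ : ℝ} (hω : ∀ j, ω j ^ 4 = κ) (x : ℝ) :
    expSum ω (c * ω ^ 4) x₀ x = κ * expSum ω c x₀ x := by
  simp only [expSum, Pi.mul_apply, Pi.pow_apply, hω, ← Complex.re_ofReal_mul, Finset.mul_sum]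
  congr 1
  exact Finset.sum_congr rfl fun j _ => by ring

theorem iteratedDeriv_expSum_ofReal_mul (s : ℝ) (k : ℕ) (x : ℝ) :
    iteratedDeriv k (expSum (fun j => (s : ℂ) * ω j) c x₀) x
      = s ^ k * iteratedDeriv k (expSum ω c 0) (s * (x - x₀)) := by
  simp only [iteratedDeriv_expSum, expSum, Pi.mul_apply, Pi.pow_apply, ← Complex.re_ofReal_mul,
    Finset.mul_sum]
  congr 1
  exact Finset.sum_congr rfl fun j _ => by push_cast; ring_nf

end ExpSum

theorem continuous_expSum_coeff {ι : Type*} [Fintype ι] (ω : ι → ℂ) {c : ℝ → ι → ℂ}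
    (hc : Continuous c) (x₀ x : ℝ) : Continuous fun ε => expSum ω (c ε) x₀ x := by
  unfold expSum
  fun_prop

noncomputable def jet (f : ℝ → ℝ) (x : ℝ) : Fin 4 → ℝ := fun k => iteratedDeriv k f x

-- The jet of `t ↦ f (x₀ + ε t)` at `0` is `scaleData ε (jet f x₀)`.
def scaleData (ε : ℝ) (v : Fin 4 → ℝ) : Fin 4 → ℝ := fun k => ε ^ (k : ℕ) * v k

-- Modes `e^{ωⱼ t}` solving `y'''' = κ y`, and for every jet `β` the coefficients of the real
-- solution `Re ∑ⱼ cⱼ e^{ωⱼ t}` with jet `β` at `0`.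
structure QuarticModes (κ : ℝ) (m : ℕ) where
  freq : Fin m → ℂ
  coeff : (Fin 4 → ℝ) → Fin m → ℂ
  freq_pow_four : ∀ j, freq j ^ 4 = κ
  re_sum_coeff_mul_freq_pow : ∀ β (k : Fin 4), (∑ j, coeff β j * freq j ^ (k : ℕ)).re = β k

namespace QuarticModes

variable {κ : ℝ} {m : ℕ} (M : QuarticModes κ m)

noncomputable def normalizedSol (β : Fin 4 → ℝ) : ℝ → ℝ := expSum M.freq (M.coeff β) 0

-- `x ↦ M.normalizedSol (scaleData ε v) ((x - x₀) / ε)`, which solves `y'''' = (κ / ε⁴) y`.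
noncomputable def sol (ε x₀ : ℝ) (v : Fin 4 → ℝ) : ℝ → ℝ :=
  expSum (fun j => ((ε⁻¹ : ℝ) : ℂ) * M.freq j) (M.coeff (scaleData ε v)) x₀

theorem jet_normalizedSol_zero (β : Fin 4 → ℝ) : jet (M.normalizedSol β) 0 = β :=
  funext fun k => by
    rw [jet, normalizedSol, iteratedDeriv_expSum, expSum_self, ← M.re_sum_coeff_mul_freq_pow β k]
    rfl

theorem contDiff_sol {n : WithTop ℕ∞} (ε x₀ : ℝ) (v : Fin 4 → ℝ) : ContDiff ℝ n (M.sol ε x₀ v) :=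
  contDiff_expSum _ _ _

theorem iteratedDeriv_four_sol (ε x₀ : ℝ) (v : Fin 4 → ℝ) (x : ℝ) :
    iteratedDeriv 4 (M.sol ε x₀ v) x = κ / ε ^ 4 * M.sol ε x₀ v x := by
  rw [sol, iteratedDeriv_expSum]
  refine expSum_mul_pow_four _ _ _ (fun j => ?_) x
  rw [mul_pow, M.freq_pow_four]
  push_cast
  ring

theorem iteratedDeriv_sol {ε : ℝ} (hε : ε ≠ 0) (x₀ : ℝ) (v : Fin 4 → ℝ) (k : ℕ) (t : ℝ) :
    iteratedDeriv k (M.sol ε x₀ v) (x₀ + ε * t)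
      = ε⁻¹ ^ k * iteratedDeriv k (M.normalizedSol (scaleData ε v)) t := by
  rw [sol, iteratedDeriv_expSum_ofReal_mul, normalizedSol, add_sub_cancel_left,
    inv_mul_cancel_left₀ hε]

theorem jet_sol_self {ε : ℝ} (hε : ε ≠ 0) (x₀ : ℝ) (v : Fin 4 → ℝ) : jet (M.sol ε x₀ v) x₀ = v :=
  funext fun k => by
    have := M.iteratedDeriv_sol hε x₀ v k 0
    rw [mul_zero, add_zero] at this
    rw [jet, this, ← jet, jet_normalizedSol_zero, scaleData, ← mul_assoc, ← mul_pow,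
      inv_mul_cancel₀ hε, one_pow, one_mul]

end QuarticModes

open Complex in
noncomputable def leftModes : QuarticModes (-4) 2 where
  freq := ![1 + I, -1 + I]
  -- `cⱼ = ½ ∑ₖ βₖ ωⱼ⁻ᵏ`; taking `Re` accounts for the conjugate roots `1 - i`, `-1 - i`
  coeff β := ![β 0 / 2 + (β 1 - β 3 / 2) / 4 - (β 1 + β 2 + β 3 / 2) / 4 * I,
    β 0 / 2 - (β 1 - β 3 / 2) / 4 - (β 1 - β 2 + β 3 / 2) / 4 * I]
  freq_pow_four j := by
    push_cast
    fin_cases j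
    · exact (by linear_combination (I ^ 2 + 4 * I + 5) * I_sq : (1 + I) ^ 4 = -4)
    · exact (by linear_combination (I ^ 2 - 4 * I + 5) * I_sq : (-1 + I) ^ 4 = -4)
  re_sum_coeff_mul_freq_pow β k := by
    fin_cases k <;> simp [Fin.sum_univ_two, pow_succ] <;> ring

open Complex in
noncomputable def rightModes : QuarticModes 1 3 where
  freq := ![1, -1, I]
  -- `(P, Q, C) = (¼ ∑ₖ βₖ, ¼ ∑ₖ (-1)ᵏ βₖ, ½ ∑ₖ i⁻ᵏ βₖ)`
  coeff β := ![(β 0 + β 1 + β 2 + β 3) / 4, (β 0 - β 1 + β 2 - β 3) / 4,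
    (β 0 - β 2) / 2 + (β 3 - β 1) / 2 * I]
  freq_pow_four j := by
    fin_cases j <;> norm_num [I_pow_four]
  re_sum_coeff_mul_freq_pow β k := by
    fin_cases k <;> simp [Fin.sum_univ_three, pow_succ] <;> ring

def SignPattern (v : Fin 4 → ℝ) : Prop := 0 < v 0 ∧ v 1 < 0 ∧ v 2 < 0 ∧ v 3 < 0

theorem isOpen_setOf_signPattern : IsOpen {v | SignPattern v} :=
  (isOpen_lt continuous_const (continuous_apply 0)).inter
    ((isOpen_lt (continuous_apply 1) continuous_const).inter
    ((isOpen_lt (continuous_apply 2) continuous_const).inter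
    (isOpen_lt (continuous_apply 3) continuous_const)))

theorem SignPattern.pow_mul {v : Fin 4 → ℝ} (hv : SignPattern v) {c : ℝ} (hc : 0 < c) :
    SignPattern fun k => c ^ (k : ℕ) * v k := by
  obtain ⟨h₀, h₁, h₂, h₃⟩ := hv
  exact ⟨by simpa using h₀, mul_neg_of_pos_of_neg (by positivity) h₁,
    mul_neg_of_pos_of_neg (by positivity) h₂, mul_neg_of_pos_of_neg (by positivity) h₃⟩

theorem continuous_jet_leftModes_normalizedSol (v : Fin 4 → ℝ) (t : ℝ) :
    Continuous fun ε => jet (leftModes.normalizedSol (scaleData ε v)) t := by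
  refine continuous_pi fun k => ?_
  simp only [jet, QuarticModes.normalizedSol, iteratedDeriv_expSum]
  refine continuous_expSum_coeff _ ?_ 0 t
  simp only [leftModes, scaleData]
  fun_prop

-- At `ε = 0` the solution is `v 0 * cosh t * cos t`.
theorem signPattern_jet_leftModes_normalizedSol_zero {v : Fin 4 → ℝ} (hv : 0 < v 0) :
    SignPattern (jet (leftModes.normalizedSol (scaleData 0 v)) (π / 4)) := by
  have he : rexp (-(π / 4)) < rexp (π / 4) := exp_lt_exp.2 (by linarith [pi_pos])
  have he' := exp_pos (-(π / 4))
  have h2 : (0 : ℝ) < √2 := by positivity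
  have hc := mul_pos hv h2
  refine ⟨?_, ?_, ?_, ?_⟩ <;>
  simp only [jet, QuarticModes.normalizedSol, iteratedDeriv_expSum] <;>
  simp [expSum, scaleData, leftModes, Fin.sum_univ_two, Complex.exp_re, Complex.exp_im,
    pow_succ] <;>
  nlinarith [mul_pos hc (exp_pos (π / 4)), mul_pos hc he', mul_lt_mul_of_pos_left he hc]

theorem exists_signPattern_jet_leftModes_sol (a : ℝ) {v : Fin 4 → ℝ} (hv : 0 < v 0) :
    ∃ ε > 0, SignPattern (jet (leftModes.sol ε a v) (a + ε * (π / 4))) := by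
  have hev : ∀ᶠ ε in nhdsWithin 0 (Ioi 0),
      SignPattern (jet (leftModes.normalizedSol (scaleData ε v)) (π / 4)) :=
    nhdsWithin_le_nhds ((continuous_jet_leftModes_normalizedSol v _).continuousAt.preimage_mem_nhds
      (isOpen_setOf_signPattern.mem_nhds (signPattern_jet_leftModes_normalizedSol_zero hv)))
  obtain ⟨ε, hsign, hε⟩ := (hev.and self_mem_nhdsWithin).exists
  refine ⟨ε, hε, ?_⟩
  have hscale : jet (leftModes.sol ε a v) (a + ε * (π / 4))
      = fun k : Fin 4 => ε⁻¹ ^ (k : ℕ) * jet (leftModes.normalizedSol (scaleData ε v)) (π / 4) k :=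
    funext fun k => leftModes.iteratedDeriv_sol hε.ne' a v k (π / 4)
  exact hscale ▸ hsign.pow_mul (inv_pos.2 hε)

theorem exists_exp_balance_and_sin_cos_balance {p q r s : ℝ} (hp : 0 < p) (hq : q < 0)
    (hr : r < 0) (hs : s < 0) :
    ∃ ε > 0, ∃ θ > 0,
      (p + ε * q + ε ^ 2 * r + ε ^ 3 * s) * exp θ
        = (p - ε * q + ε ^ 2 * r - ε ^ 3 * s) * exp (-θ) ∧
      (p - ε ^ 2 * r) * sin θ + (ε ^ 3 * s - ε * q) * cos θ = 0 := by
  have hden : ∀ ε : ℝ, 0 < p - ε ^ 2 * r := fun ε => by nlinarith [sq_nonneg ε]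
  set θ : ℝ → ℝ := fun ε => π - arctan ((ε ^ 3 * s - ε * q) / (p - ε ^ 2 * r)) with hθ
  have hθ_pos : ∀ ε, 0 < θ ε := fun ε => by
    linarith [arctan_lt_pi_div_two ((ε ^ 3 * s - ε * q) / (p - ε ^ 2 * r)), pi_pos]
  have htrig : ∀ ε, (p - ε ^ 2 * r) * sin (θ ε) + (ε ^ 3 * s - ε * q) * cos (θ ε) = 0 := by
    intro ε
    have := (hden ε).ne'
    simp only [hθ, sin_pi_sub, cos_pi_sub, sin_arctan, cos_arctan]
    field_simp
    ring
  set K : ℝ → ℝ := fun ε => (p + ε * q + ε ^ 2 * r + ε ^ 3 * s) * exp (θ ε)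
    - (p - ε * q + ε ^ 2 * r - ε ^ 3 * s) * exp (-θ ε) with hK
  have hθ_cont : Continuous θ :=
    continuous_const.sub (continuous_arctan.comp
      ((by fun_prop : Continuous _).div (by fun_prop) fun ε => (hden ε).ne'))
  have hK_cont : Continuous K := by fun_prop
  have hK₀ : 0 < K 0 := by
    have hθ₀ : θ 0 = π := by simp [hθ]
    simp only [hK, hθ₀]
    nlinarith [exp_lt_exp.2 (show -π < π by linarith [pi_pos])]
  set ε₀ := √(-p / r)
  have hε₀ : 0 < ε₀ := sqrt_pos.2 (div_pos_of_neg_of_neg (by linarith) hr)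
  have hrε₀ : ε₀ ^ 2 * r = -p := by
    rw [sq_sqrt (div_pos_of_neg_of_neg (by linarith) hr).le, div_mul_cancel₀ _ hr.ne]
  have hKε₀ : K ε₀ < 0 := by
    have hneg : ε₀ * q + ε₀ ^ 3 * s < 0 := by nlinarith [pow_pos hε₀ 3]
    simp only [hK, hrε₀]
    nlinarith [exp_pos (θ ε₀), exp_pos (-θ ε₀)]
  obtain ⟨ε, hε, hKε⟩ := intermediate_value_Icc' hε₀.le hK_cont.continuousOn ⟨hKε₀.le, hK₀.le⟩
  refine ⟨ε, hε.1.lt_of_ne ?_, θ ε, hθ_pos ε, ?_, htrig ε⟩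
  · rintro rfl
    exact hK₀.ne' hKε
  · linarith [show K ε = 0 from hKε]

theorem exists_iteratedDeriv_one_three_rightModes_sol_eq_zero {v : Fin 4 → ℝ}
    (hv : SignPattern v) (b : ℝ) :
    ∃ δ > 0, ∃ θ > 0, iteratedDeriv 1 (rightModes.sol δ b v) (b + δ * θ) = 0 ∧
      iteratedDeriv 3 (rightModes.sol δ b v) (b + δ * θ) = 0 := by
  obtain ⟨h₀, h₁, h₂, h₃⟩ := hv
  obtain ⟨δ, hδ, θ, hθ, hexp, htrig⟩ := exists_exp_balance_and_sin_cos_balance h₀ h₁ h₂ h₃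
  refine ⟨δ, hδ, θ, hθ, ?_, ?_⟩ <;>
  rw [rightModes.iteratedDeriv_sol hδ.ne', mul_eq_zero] <;> right <;>
  simp only [QuarticModes.normalizedSol, iteratedDeriv_expSum] <;>
  simp [expSum, scaleData, rightModes, Fin.sum_univ_three, Complex.exp_re, Complex.exp_im,
    pow_succ]
  · linear_combination (1 / 4) * hexp - (1 / 2) * htrig
  · linear_combination (1 / 4) * hexp + (1 / 2) * htrig

theorem stmt_5_general (a α₀ α₁ α₂ α₃ : ℝ)
    (h₀ : 0 < α₀) :
    ∃ (b A B ζ : ℝ) (u : ℝ → ℝ),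
      a < b ∧ 0 < A ∧ 0 < B ∧ b < ζ ∧
      -- u is three times continuously differentiable on [a, ∞)
      ContDiffOn ℝ 3 u (Ici a) ∧
      -- u is four times differentiable on (a, b) ∪ (b, ∞)
      (∀ x ∈ Ioo a b ∪ Ioi b,
        DifferentiableWithinAt ℝ (iteratedDerivWithin 3 u (Ici a)) (Ici a) x) ∧
      -- the differential equation on each side of b
      (∀ x ∈ Ioo a b, iteratedDerivWithin 4 u (Ici a) x = -A * u x) ∧
      (∀ x ∈ Ioi b, iteratedDerivWithin 4 u (Ici a) x = B * u x) ∧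
      -- initial conditions at a
      u a = α₀ ∧
      iteratedDerivWithin 1 u (Ici a) a = α₁ ∧
      iteratedDerivWithin 2 u (Ici a) a = α₂ ∧
      iteratedDerivWithin 3 u (Ici a) a = α₃ ∧
      -- the conclusion: u'(ζ) = u'''(ζ) = 0
      iteratedDerivWithin 1 u (Ici a) ζ = 0 ∧
      iteratedDerivWithin 3 u (Ici a) ζ = 0 := by
  set α : Fin 4 → ℝ := ![α₀, α₁, α₂, α₃]
  obtain ⟨ε, hε, hLb⟩ := exists_signPattern_jet_leftModes_sol a (v := α) h₀
  set b := a + ε * (π / 4)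
  set L := leftModes.sol ε a α
  obtain ⟨δ, hδ, θ, hθ, hR₁, hR₃⟩ := exists_iteratedDeriv_one_three_rightModes_sol_eq_zero hLb b
  set R := rightModes.sol δ b (jet L b)
  have hab : a < b := lt_add_of_pos_right a (by positivity)
  have hbζ : b < b + δ * θ := lt_add_of_pos_right b (by positivity)
  have hLa := leftModes.jet_sol_self hε.ne' a α
  have hjet := rightModes.jet_sol_self hδ.ne' b (jet L b)
  have hu : ContDiff ℝ 3 (glue b L R) := by
    exact_mod_cast contDiff_glue (n := 3) (leftModes.contDiff_sol ε a α)
      (rightModes.contDiff_sol δ b _) fun k hk => (congrFun hjet ⟨k, by omega⟩).symm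
  have hs := uniqueDiffOn_Ici a
  have hua := glue_eventuallyEq_left L R hab
  have huζ := glue_eventuallyEq_right L R hbζ
  refine ⟨b, 4 / ε ^ 4, 1 / δ ^ 4, b + δ * θ, glue b L R, hab, by positivity, by positivity, hbζ,
    hu.contDiffOn, ?_, fun x hx => ?_, fun x hx => ?_, hua.eq_of_nhds.trans (congrFun hLa 0),
    ?_, ?_, ?_, ?_, ?_⟩
  · rintro x (hx | hx)
    · exact differentiableWithinAt_iteratedDerivWithin_of_eventuallyEq hs hx.1.le
        (leftModes.contDiff_sol ε a α) (glue_eventuallyEq_left L R hx.2)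
    · exact differentiableWithinAt_iteratedDerivWithin_of_eventuallyEq hs (hab.trans hx).le
        (rightModes.contDiff_sol δ b _) (glue_eventuallyEq_right L R hx)
  · rw [iteratedDerivWithin_eq_of_eventuallyEq hs hx.1.le (leftModes.contDiff_sol ε a α)
      (glue_eventuallyEq_left L R hx.2), leftModes.iteratedDeriv_four_sol, glue, if_pos hx.2.le]
    ring
  · rw [iteratedDerivWithin_eq_of_eventuallyEq hs (hab.trans hx).le
      (rightModes.contDiff_sol δ b _) (glue_eventuallyEq_right L R hx),
      rightModes.iteratedDeriv_four_sol, glue, if_neg (not_le.2 hx)]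
  all_goals first
    | rw [iteratedDerivWithin_eq_of_eventuallyEq hs self_mem_Ici (leftModes.contDiff_sol ε a α) hua]
    | rw [iteratedDerivWithin_eq_of_eventuallyEq hs (hab.trans hbζ).le
        (rightModes.contDiff_sol δ b _) huζ]
  exacts [congrFun hLa 1, congrFun hLa 2, congrFun hLa 3, hR₁, hR₃]

/-- Proposition 1: given `a` and positive initial data `α₀, α₁, α₂, α₃`, one can
choose `b > a`, `A > 0`, `B > 0` such that the solution of `u'''' + Q₀ u = 0` on
`(a, ∞)` (with `Q₀ = A` on `[a,b)` and `Q₀ = -B` on `[b,∞)`) with these initial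
data at `a` satisfies `u'(ζ) = u'''(ζ) = 0` at some `ζ ∈ (b, ∞)`. -/
theorem stmt_5 (a α₀ α₁ α₂ α₃ : ℝ)
    (h₀ : 0 < α₀) (h₁ : 0 < α₁) (h₂ : 0 < α₂) (h₃ : 0 < α₃) :
    ∃ (b A B ζ : ℝ) (u : ℝ → ℝ),
      a < b ∧ 0 < A ∧ 0 < B ∧ b < ζ ∧
      -- u is three times continuously differentiable on [a, ∞)
      ContDiffOn ℝ 3 u (Ici a) ∧
      -- u is four times differentiable on (a, b) ∪ (b, ∞)
      (∀ x ∈ Ioo a b ∪ Ioi b,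
        DifferentiableWithinAt ℝ (iteratedDerivWithin 3 u (Ici a)) (Ici a) x) ∧
      -- the differential equation on each side of b
      (∀ x ∈ Ioo a b, iteratedDerivWithin 4 u (Ici a) x = -A * u x) ∧
      (∀ x ∈ Ioi b, iteratedDerivWithin 4 u (Ici a) x = B * u x) ∧
      -- initial conditions at a
      u a = α₀ ∧
      iteratedDerivWithin 1 u (Ici a) a = α₁ ∧
      iteratedDerivWithin 2 u (Ici a) a = α₂ ∧
      iteratedDerivWithin 3 u (Ici a) a = α₃ ∧
      -- the conclusion: u'(ζ) = u'''(ζ) = 0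
      iteratedDerivWithin 1 u (Ici a) ζ = 0 ∧
      iteratedDerivWithin 3 u (Ici a) ζ = 0 :=
  stmt_5_general a α₀ α₁ α₂ α₃ h₀
end

section
/- (Lemma 1) Let γ₀ > 0, γ₁ > 0, γ₂ < 0, γ₃ < 0 be fixed real numbers. For B > 0 let u(·;B) be the (unique, smooth) solution of u'''' = B u on ℝ with u(0) = γ₀, u'(0) = γ₁, u''(0) = γ₂, u'''(0) = γ₃. Then there exists B > 0 and a point z > 0 such that u'(z;B) = 0, u'''(z;B) = 0, and neither u'(·;B) nor u'''(·;B) vanishes anywhere in the open interval (0, z); that is, z is simultaneously the smallest positive zero of u' and the smallest positive zero of u'''. -/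
open Real Set

noncomputable def Ufun (ω a b c d : ℝ) (x : ℝ) : ℝ :=
  a * Real.cos (ω*x) + b * Real.sin (ω*x) + c * Real.cosh (ω*x) + d * Real.sinh (ω*x)

lemma contDiff_Ufun (ω a b c d : ℝ) : ContDiff ℝ (⊤ : ℕ∞) (Ufun ω a b c d) := by
  unfold Ufun
  exact ((((contDiff_const.mul (Real.contDiff_cos.comp (contDiff_const.mul contDiff_id))).add
    (contDiff_const.mul (Real.contDiff_sin.comp (contDiff_const.mul contDiff_id)))).add
    (contDiff_const.mul (Real.contDiff_cosh.comp (contDiff_const.mul contDiff_id)))).add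
    (contDiff_const.mul (Real.contDiff_sinh.comp (contDiff_const.mul contDiff_id))))

lemma hasDerivAt_Ufun (ω a b c d x : ℝ) :
    HasDerivAt (Ufun ω a b c d) (Ufun ω (ω*b) (-(ω*a)) (ω*d) (ω*c) x) x := by
  have hωx : HasDerivAt (fun x : ℝ => ω * x) ω x := by
    simpa using (hasDerivAt_id x).const_mul ω
  have h : HasDerivAt (Ufun ω a b c d)
      (a * (-Real.sin (ω*x) * ω) + b * (Real.cos (ω*x) * ω)
        + c * (Real.sinh (ω*x) * ω) + d * (Real.cosh (ω*x) * ω)) x := by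
    exact (((hωx.cos.const_mul a).add (hωx.sin.const_mul b)).add
      (hωx.cosh.const_mul c)).add (hωx.sinh.const_mul d)
  convert h using 1
  unfold Ufun; ring

lemma deriv_Ufun (ω a b c d : ℝ) :
    deriv (Ufun ω a b c d) = Ufun ω (ω*b) (-(ω*a)) (ω*d) (ω*c) :=
  funext fun x => (hasDerivAt_Ufun ω a b c d x).deriv

lemma hyp_det {c d X Z : ℝ} (hXZ : X ≠ Z)
    (h1 : c * Real.sinh X + d * Real.cosh X = 0)
    (h2 : c * Real.sinh Z + d * Real.cosh Z = 0) : c = 0 ∧ d = 0 := by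
  have hdet : Real.sinh (X - Z) ≠ 0 := by
    simp [Real.sinh_eq_zero, sub_eq_zero, hXZ]
  have hc : c * Real.sinh (X - Z) = 0 := by
    rw [Real.sinh_sub]
    nlinarith [Real.cosh_pos X, Real.cosh_pos Z]
  have hc0 : c = 0 := by
    rcases mul_eq_zero.mp hc with h | h
    · exact h
    · exact absurd h hdet
  refine ⟨hc0, ?_⟩
  rw [hc0] at h2
  have := Real.cosh_pos Z
  nlinarith

lemma neg_on_Ico {f : ℝ → ℝ} {z : ℝ} (hf : Continuous f)
    (hne : ∀ x ∈ Ico (0:ℝ) z, f x ≠ 0) (h0 : f 0 < 0) :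
    ∀ x ∈ Ico (0:ℝ) z, f x < 0 := by
  intro x hx
  by_contra hge
  push_neg at hge
  have hlt : 0 < f x := lt_of_le_of_ne hge (Ne.symm (hne x hx))
  have hsub : Icc (f 0) (f x) ⊆ f '' Icc 0 x :=
    intermediate_value_Icc hx.1 hf.continuousOn
  obtain ⟨y, hy, hy0⟩ := hsub ⟨le_of_lt h0, le_of_lt hlt⟩
  exact hne y ⟨hy.1, lt_of_le_of_lt hy.2 hx.2⟩ hy0

lemma pos_on_Ico {f : ℝ → ℝ} {z : ℝ} (hf : Continuous f)
    (hne : ∀ x ∈ Ico (0:ℝ) z, f x ≠ 0) (h0 : 0 < f 0) :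
    ∀ x ∈ Ico (0:ℝ) z, 0 < f x := by
  have := neg_on_Ico (f := fun x => -f x) (z := z) hf.neg
    (fun x hx h => hne x hx (by linarith [neg_eq_zero.mp h])) (by simpa using h0)
  intro x hx
  have := this x hx
  simpa using this

lemma main_aux (ω a b c d γ₀ γ₁ γ₂ γ₃ s : ℝ)
    (hω : 0 < ω) (ha : 0 < a)
    (hs0 : 0 < s) (hs2 : s < π/2)
    (hIC0 : a + c = γ₀) (hIC1 : ω*(b + d) = γ₁) (hIC2 : ω^2*(c - a) = γ₂)
    (hIC3 : ω^3*(d - b) = γ₃)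
    (h₀ : 0 < γ₀) (h₁ : 0 < γ₁) (h₂ : γ₂ < 0) (h₃ : γ₃ < 0)
    (hgz : b * Real.cos s - a * Real.sin s = 0)
    (hfz : c * Real.sinh s + d * Real.cosh s = 0) :
    ∃ (B : ℝ) (u : ℝ → ℝ) (z : ℝ),
      0 < B ∧ 0 < z ∧
      ContDiff ℝ (⊤ : ℕ∞) u ∧
      (∀ x : ℝ, iteratedDeriv 4 u x = B * u x) ∧
      u 0 = γ₀ ∧ deriv u 0 = γ₁ ∧
      iteratedDeriv 2 u 0 = γ₂ ∧ iteratedDeriv 3 u 0 = γ₃ ∧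
      deriv u z = 0 ∧ iteratedDeriv 3 u z = 0 ∧
      (∀ x ∈ Ioo 0 z, deriv u x ≠ 0 ∧ iteratedDeriv 3 u x ≠ 0) := by
  set z := s / ω with hz_def
  have hz : 0 < z := div_pos hs0 hω
  have hωz : ω * z = s := by rw [hz_def]; field_simp
  set u := Ufun ω a b c d with hu_def
  set u1 := Ufun ω (ω*b) (-(ω*a)) (ω*d) (ω*c) with hu1_def
  set u2 := Ufun ω (-(ω^2*a)) (-(ω^2*b)) (ω^2*c) (ω^2*d) with hu2_def
  set u3 := Ufun ω (-(ω^3*b)) (ω^3*a) (ω^3*d) (ω^3*c) with hu3_def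
  have hd0 : deriv u = u1 := deriv_Ufun ω a b c d
  have hd1 : deriv u1 = u2 := by
    rw [hu1_def, deriv_Ufun]; funext x; simp only [Ufun, hu2_def]; ring
  have hd2 : deriv u2 = u3 := by
    rw [hu2_def, deriv_Ufun]; funext x; simp only [Ufun, hu3_def]; ring
  have hd3 : deriv u3 = fun x => ω^4 * u x := by
    rw [hu3_def, deriv_Ufun]; funext x; simp only [Ufun, hu_def]; ring
  have hid2 : iteratedDeriv 2 u = u2 := by
    rw [iteratedDeriv_succ, iteratedDeriv_one, hd0, hd1]
  have hid3 : iteratedDeriv 3 u = u3 := by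
    rw [iteratedDeriv_succ, hid2, hd2]
  have hid4 : iteratedDeriv 4 u = fun x => ω^4 * u x := by
    rw [iteratedDeriv_succ, hid3, hd3]
  -- the trig and hyperbolic parts
  set g : ℝ → ℝ := fun x => b * Real.cos (ω*x) - a * Real.sin (ω*x) with hg_def
  set f : ℝ → ℝ := fun x => c * Real.sinh (ω*x) + d * Real.cosh (ω*x) with hf_def
  have hgz0 : g z = 0 := by rw [hg_def]; simp only; rw [hωz]; exact hgz
  have hfz0 : f z = 0 := by rw [hf_def]; simp only; rw [hωz]; exact hfz
  have hu1x : ∀ x, u1 x = ω * (g x + f x) := by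
    intro x; simp only [hu1_def, Ufun, hg_def, hf_def]; ring
  have hu3x : ∀ x, u3 x = ω^3 * (f x - g x) := by
    intro x; simp only [hu3_def, Ufun, hg_def, hf_def]; ring
  have hu1z : u1 z = 0 := by rw [hu1x, hgz0, hfz0]; ring
  have hu3z : u3 z = 0 := by rw [hu3x, hgz0, hfz0]; ring
  -- g is positive on [0, z)
  have hgpos : ∀ x ∈ Ico (0:ℝ) z, 0 < g x := by
    intro x hx
    have hX0 : 0 ≤ ω * x := mul_nonneg hω.le hx.1
    have hXs : ω * x < s := by
      rw [← hωz]; exact mul_lt_mul_of_pos_left hx.2 hω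
    have hcosX : 0 < Real.cos (ω*x) :=
      Real.cos_pos_of_mem_Ioo ⟨by nlinarith [Real.pi_pos], by linarith⟩
    have hcoss : 0 < Real.cos s :=
      Real.cos_pos_of_mem_Ioo ⟨by nlinarith [Real.pi_pos], hs2⟩
    have htt : Real.tan (ω*x) < Real.tan s :=
      Real.tan_lt_tan_of_nonneg_of_lt_pi_div_two hX0 hs2 hXs
    rw [Real.tan_eq_sin_div_cos, Real.tan_eq_sin_div_cos] at htt
    have htt' : Real.sin (ω*x) * Real.cos s < Real.sin s * Real.cos (ω*x) :=
      (div_lt_div_iff₀ hcosX hcoss).mp htt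
    have key := mul_lt_mul_of_pos_left htt' ha
    simp only [hg_def]
    nlinarith [key, hcoss, hcosX, hgz]
  -- f has no zero on [0,z) unless c = d = 0
  have hkey : ∀ x ∈ Ico (0:ℝ) z, f x = 0 → c = 0 ∧ d = 0 := by
    intro x hx hfx
    refine hyp_det (X := ω*x) (Z := ω*z) ?_ hfx ?_
    · have : ω * x < ω * z := mul_lt_mul_of_pos_left hx.2 hω
      exact ne_of_lt this
    · rw [hωz]; exact hfz
  have hfcont : Continuous f := by
    rw [hf_def]
    exact (continuous_const.mul (Real.continuous_sinh.comp (continuous_const.mul continuous_id))).add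
      (continuous_const.mul (Real.continuous_cosh.comp (continuous_const.mul continuous_id)))
  have hf0 : f 0 = d := by simp [hf_def]
  -- main sign claim
  have hsigns : ∀ x ∈ Ioo (0:ℝ) z, 0 < u1 x ∧ u3 x < 0 := by
    rcases le_or_gt d 0 with hd | hd
    · -- d ≤ 0 : f ≤ 0 on [0,z), hence u3 < 0 there, then u1 > 0 by monotonicity
      have hfle : ∀ x ∈ Ico (0:ℝ) z, f x ≤ 0 := by
        rcases lt_or_eq_of_le hd with hd' | hd'
        · intro x hx
          exact le_of_lt (neg_on_Ico hfcont
            (fun y hy h => by have := (hkey y hy h).2; linarith) (by rw [hf0]; exact hd') x hx)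
        · -- d = 0 forces c = 0, so f ≡ 0
          have hc0 : c = 0 := by
            have hsne : Real.sinh s ≠ 0 := Real.sinh_ne_zero.mpr (ne_of_gt hs0)
            have : c * Real.sinh s = 0 := by
              have h := hfz; rw [hd'] at h; simpa using h
            rcases mul_eq_zero.mp this with h | h
            · exact h
            · exact absurd h hsne
          intro x hx
          simp [hf_def, hc0, hd']
      have hu3neg : ∀ x ∈ Ioo (0:ℝ) z, u3 x < 0 := by
        intro x hx
        have h1 := hgpos x ⟨hx.1.le, hx.2⟩
        have h2 := hfle x ⟨hx.1.le, hx.2⟩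
        rw [hu3x]
        have : f x - g x < 0 := by linarith
        exact mul_neg_of_pos_of_neg (by positivity) this
      -- u2 strictly decreasing, so u2 < γ₂ < 0 on (0, z]
      have hu2anti : StrictAntiOn u2 (Icc 0 z) := by
        apply strictAntiOn_of_deriv_neg (convex_Icc 0 z)
          (contDiff_Ufun _ _ _ _ _).continuous.continuousOn
        intro x hx
        rw [interior_Icc] at hx
        rw [hd2]
        exact hu3neg x hx
      have hu20 : u2 0 = γ₂ := by
        simp [hu2_def, Ufun]; linear_combination hIC2
      have hu2neg : ∀ x ∈ Ioo (0:ℝ) z, u2 x < 0 := by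
        intro x hx
        have := hu2anti (left_mem_Icc.mpr hz.le) ⟨hx.1.le, hx.2.le⟩ hx.1
        rw [hu20] at this; linarith
      have hu1anti : StrictAntiOn u1 (Icc 0 z) := by
        apply strictAntiOn_of_deriv_neg (convex_Icc 0 z)
          (contDiff_Ufun _ _ _ _ _).continuous.continuousOn
        intro x hx
        rw [interior_Icc] at hx
        rw [hd1]
        exact hu2neg x hx
      intro x hx
      refine ⟨?_, hu3neg x hx⟩
      have := hu1anti ⟨hx.1.le, hx.2.le⟩ (right_mem_Icc.mpr hz.le) hx.2
      rw [hu1z] at this; linarith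
    · -- d > 0 : f > 0 on [0,z), hence u1 > 0 there, then u3 < 0 by monotonicity
      have hfpos : ∀ x ∈ Ico (0:ℝ) z, 0 < f x :=
        pos_on_Ico hfcont (fun y hy h => by have := (hkey y hy h).2; linarith)
          (by rw [hf0]; exact hd)
      have hu1pos : ∀ x ∈ Ioo (0:ℝ) z, 0 < u1 x := by
        intro x hx
        have h1 := hgpos x ⟨hx.1.le, hx.2⟩
        have h2 := hfpos x ⟨hx.1.le, hx.2⟩
        rw [hu1x]
        have : 0 < g x + f x := by linarith
        exact mul_pos hω this
      have humono : StrictMonoOn u (Icc 0 z) := by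
        apply strictMonoOn_of_deriv_pos (convex_Icc 0 z)
          (contDiff_Ufun _ _ _ _ _).continuous.continuousOn
        intro x hx
        rw [interior_Icc] at hx
        rw [hd0]
        exact hu1pos x hx
      have hu0 : u 0 = γ₀ := by
        simp [hu_def, Ufun]; linear_combination hIC0
      have hupos : ∀ x ∈ Icc (0:ℝ) z, 0 < u x := by
        intro x hx
        rcases eq_or_lt_of_le hx.1 with h | h
        · rw [← h, hu0]; exact h₀
        · have := humono (left_mem_Icc.mpr hz.le) hx h
          rw [hu0] at this; linarith
      have hu3mono : StrictMonoOn u3 (Icc 0 z) := by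
        apply strictMonoOn_of_deriv_pos (convex_Icc 0 z)
          (contDiff_Ufun _ _ _ _ _).continuous.continuousOn
        intro x hx
        rw [interior_Icc] at hx
        rw [hd3]
        exact mul_pos (by positivity) (hupos x ⟨hx.1.le, hx.2.le⟩)
      intro x hx
      refine ⟨hu1pos x hx, ?_⟩
      have := hu3mono ⟨hx.1.le, hx.2.le⟩ (right_mem_Icc.mpr hz.le) hx.2
      rw [hu3z] at this; linarith
  refine ⟨ω^4, u, z, pow_pos hω 4, hz, contDiff_Ufun _ _ _ _ _, ?_, ?_, ?_, ?_, ?_, ?_, ?_, ?_⟩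
  · intro x; rw [hid4]
  · simp [hu_def, Ufun]; linear_combination hIC0
  · rw [hd0]; simp [hu1_def, Ufun]; linear_combination hIC1
  · rw [hid2]; simp [hu2_def, Ufun]; linear_combination hIC2
  · rw [hid3]; simp [hu3_def, Ufun]; linear_combination hIC3
  · rw [hd0]; exact hu1z
  · rw [hid3]; exact hu3z
  · intro x hx
    obtain ⟨h1, h3⟩ := hsigns x hx
    exact ⟨by rw [hd0]; exact ne_of_gt h1, by rw [hid3]; exact ne_of_lt h3⟩

noncomputable def Hfun (γ₀ γ₁ γ₂ γ₃ ω : ℝ) : ℝ :=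
  (γ₀ + γ₂/ω^2) * Real.sinh (Real.arctan ((γ₁/ω - γ₃/ω^3) / (γ₀ - γ₂/ω^2)))
    + (γ₁/ω + γ₃/ω^3) * Real.cosh (Real.arctan ((γ₁/ω - γ₃/ω^3) / (γ₀ - γ₂/ω^2)))

lemma aa_pos {γ₀ γ₂ ω : ℝ} (h₀ : 0 < γ₀) (h₂ : γ₂ < 0) (hω : 0 < ω) :
    0 < γ₀ - γ₂/ω^2 := by
  have : γ₂/ω^2 < 0 := div_neg_of_neg_of_pos h₂ (by positivity)
  linarith

lemma bb_pos {γ₁ γ₃ ω : ℝ} (h₁ : 0 < γ₁) (h₃ : γ₃ < 0) (hω : 0 < ω) :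
    0 < γ₁/ω - γ₃/ω^3 := by
  have h1 : 0 < γ₁/ω := div_pos h₁ hω
  have h2 : γ₃/ω^3 < 0 := div_neg_of_neg_of_pos h₃ (by positivity)
  linarith

lemma s_pos {γ₀ γ₁ γ₂ γ₃ ω : ℝ} (h₀ : 0 < γ₀) (h₁ : 0 < γ₁) (h₂ : γ₂ < 0)
    (h₃ : γ₃ < 0) (hω : 0 < ω) :
    0 < Real.arctan ((γ₁/ω - γ₃/ω^3) / (γ₀ - γ₂/ω^2)) := by
  have := Real.arctan_strictMono (div_pos (bb_pos h₁ h₃ hω) (aa_pos h₀ h₂ hω))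
  simpa using this

lemma Hfun_contOn (γ₀ γ₁ γ₂ γ₃ : ℝ) (h₀ : 0 < γ₀) (h₂ : γ₂ < 0) :
    ContinuousOn (Hfun γ₀ γ₁ γ₂ γ₃) (Ioi (0:ℝ)) := by
  have hpow : ∀ n : ℕ, ∀ ω ∈ Ioi (0:ℝ), (ω:ℝ)^n ≠ 0 := by
    intro n ω hω; exact pow_ne_zero n (ne_of_gt hω)
  have hq : ∀ (γ : ℝ) (n : ℕ), ContinuousOn (fun ω : ℝ => γ / ω^n) (Ioi (0:ℝ)) :=
    fun γ n => continuousOn_const.div (continuousOn_pow n) (hpow n)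
  have hbb : ContinuousOn (fun ω : ℝ => γ₁/ω - γ₃/ω^3) (Ioi (0:ℝ)) := by
    have := (hq γ₁ 1).sub (hq γ₃ 3); simp only [pow_one] at this; exact this
  have haa : ContinuousOn (fun ω : ℝ => γ₀ - γ₂/ω^2) (Ioi (0:ℝ)) :=
    continuousOn_const.sub (hq γ₂ 2)
  have hcc : ContinuousOn (fun ω : ℝ => γ₀ + γ₂/ω^2) (Ioi (0:ℝ)) :=
    continuousOn_const.add (hq γ₂ 2)
  have hdd : ContinuousOn (fun ω : ℝ => γ₁/ω + γ₃/ω^3) (Ioi (0:ℝ)) := by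
    have := (hq γ₁ 1).add (hq γ₃ 3); simp only [pow_one] at this; exact this
  have hs : ContinuousOn
      (fun ω : ℝ => Real.arctan ((γ₁/ω - γ₃/ω^3) / (γ₀ - γ₂/ω^2))) (Ioi (0:ℝ)) :=
    Real.continuous_arctan.comp_continuousOn
      (hbb.div haa (fun ω hω => ne_of_gt (aa_pos h₀ h₂ hω)))
  exact (hcc.mul (Real.continuous_sinh.comp_continuousOn hs)).add
    (hdd.mul (Real.continuous_cosh.comp_continuousOn hs))

lemma exists_omega (γ₀ γ₁ γ₂ γ₃ : ℝ)
    (h₀ : 0 < γ₀) (h₁ : 0 < γ₁) (h₂ : γ₂ < 0) (h₃ : γ₃ < 0) :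
    ∃ ω : ℝ, 0 < ω ∧ Hfun γ₀ γ₁ γ₂ γ₃ ω = 0 := by
  set m := min (-γ₂/γ₀) (-γ₃/γ₁) with hm
  set M := max (-γ₂/γ₀) (-γ₃/γ₁) with hM
  have hmpos : 0 < m := lt_min (div_pos (by linarith) h₀) (div_pos (by linarith) h₁)
  have hmM : m ≤ M := min_le_max
  set lo := Real.sqrt (m/2) with hlo
  set hi := Real.sqrt (2*M) with hhi
  have hlopos : 0 < lo := Real.sqrt_pos.mpr (by linarith)
  have hlosq : lo^2 = m/2 := Real.sq_sqrt (by linarith)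
  have hhisq : hi^2 = 2*M := Real.sq_sqrt (by linarith)
  have hhipos : 0 < hi := Real.sqrt_pos.mpr (by linarith)
  have hlohi : lo ≤ hi := Real.sqrt_le_sqrt (by linarith)
  -- key products
  have k1 : γ₀ * m ≤ -γ₂ := by
    have := min_le_left (-γ₂/γ₀) (-γ₃/γ₁)
    calc γ₀ * m ≤ γ₀ * (-γ₂/γ₀) := by nlinarith
    _ = -γ₂ := by field_simp
  have k2 : γ₁ * m ≤ -γ₃ := by
    have := min_le_right (-γ₂/γ₀) (-γ₃/γ₁)
    calc γ₁ * m ≤ γ₁ * (-γ₃/γ₁) := by nlinarith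
    _ = -γ₃ := by field_simp
  have k3 : -γ₂ ≤ γ₀ * M := by
    have := le_max_left (-γ₂/γ₀) (-γ₃/γ₁)
    calc -γ₂ = γ₀ * (-γ₂/γ₀) := by field_simp
    _ ≤ γ₀ * M := by nlinarith
  have k4 : -γ₃ ≤ γ₁ * M := by
    have := le_max_right (-γ₂/γ₀) (-γ₃/γ₁)
    calc -γ₃ = γ₁ * (-γ₃/γ₁) := by field_simp
    _ ≤ γ₁ * M := by nlinarith
  -- endpoint signs
  have hHlo : Hfun γ₀ γ₁ γ₂ γ₃ lo < 0 := by
    have hcc : γ₀ + γ₂/lo^2 < 0 := by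
      have hq : γ₂/lo^2 < -γ₀ := by
        rw [div_lt_iff₀ (by positivity : (0:ℝ) < lo^2)]
        nlinarith
      linarith
    have hdd : γ₁/lo + γ₃/lo^3 < 0 := by
      have : γ₁/lo + γ₃/lo^3 = (γ₁*lo^2 + γ₃)/lo^3 := by
        field_simp
      rw [this]
      apply div_neg_of_neg_of_pos _ (by positivity)
      nlinarith
    have hs := s_pos h₀ h₁ h₂ h₃ hlopos
    have hsh : 0 < Real.sinh (Real.arctan ((γ₁/lo - γ₃/lo^3) / (γ₀ - γ₂/lo^2))) :=
      Real.sinh_pos_iff.mpr hs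
    have hch : 0 < Real.cosh (Real.arctan ((γ₁/lo - γ₃/lo^3) / (γ₀ - γ₂/lo^2))) :=
      Real.cosh_pos _
    unfold Hfun
    have := mul_neg_of_neg_of_pos hcc hsh
    have := mul_neg_of_neg_of_pos hdd hch
    linarith
  have hHhi : 0 < Hfun γ₀ γ₁ γ₂ γ₃ hi := by
    have hcc : 0 < γ₀ + γ₂/hi^2 := by
      have h2' : -γ₀ < γ₂/hi^2 := by
        rw [neg_lt, ← neg_div, div_lt_iff₀ (by positivity : (0:ℝ) < hi^2)]
        nlinarith
      linarith
    have hdd : 0 < γ₁/hi + γ₃/hi^3 := by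
      have : γ₁/hi + γ₃/hi^3 = (γ₁*hi^2 + γ₃)/hi^3 := by
        field_simp
      rw [this]
      apply div_pos _ (by positivity)
      nlinarith
    have hs := s_pos h₀ h₁ h₂ h₃ hhipos
    have hsh : 0 < Real.sinh (Real.arctan ((γ₁/hi - γ₃/hi^3) / (γ₀ - γ₂/hi^2))) :=
      Real.sinh_pos_iff.mpr hs
    have hch : 0 < Real.cosh (Real.arctan ((γ₁/hi - γ₃/hi^3) / (γ₀ - γ₂/hi^2))) :=
      Real.cosh_pos _
    unfold Hfun
    exact add_pos (mul_pos hcc hsh) (mul_pos hdd hch)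
  have hsub : Icc lo hi ⊆ Ioi (0:ℝ) := fun x hx => lt_of_lt_of_le hlopos hx.1
  have := intermediate_value_Icc hlohi ((Hfun_contOn γ₀ γ₁ γ₂ γ₃ h₀ h₂).mono hsub)
  obtain ⟨ω, hωmem, hω0⟩ := this ⟨le_of_lt hHlo, le_of_lt hHhi⟩
  exact ⟨ω, lt_of_lt_of_le hlopos hωmem.1, hω0⟩

/-- Lemma 1: for fixed data `γ₀ > 0, γ₁ > 0, γ₂ < 0, γ₃ < 0`, there is a `B > 0`
such that the solution `u` of `u'''' = B u` with `u(0) = γ₀, u'(0) = γ₁,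
u''(0) = γ₂, u'''(0) = γ₃` has a point `z > 0` that is simultaneously the
smallest positive zero of `u'` and of `u'''`. -/
theorem stmt_6 (γ₀ γ₁ γ₂ γ₃ : ℝ)
    (h₀ : 0 < γ₀) (h₁ : 0 < γ₁) (h₂ : γ₂ < 0) (h₃ : γ₃ < 0) :
    ∃ (B : ℝ) (u : ℝ → ℝ) (z : ℝ),
      0 < B ∧ 0 < z ∧
      ContDiff ℝ (⊤ : ℕ∞) u ∧
      (∀ x : ℝ, iteratedDeriv 4 u x = B * u x) ∧
      u 0 = γ₀ ∧ deriv u 0 = γ₁ ∧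
      iteratedDeriv 2 u 0 = γ₂ ∧ iteratedDeriv 3 u 0 = γ₃ ∧
      deriv u z = 0 ∧ iteratedDeriv 3 u z = 0 ∧
      (∀ x ∈ Ioo 0 z, deriv u x ≠ 0 ∧ iteratedDeriv 3 u x ≠ 0) := by
  obtain ⟨ω, hω, hH⟩ := exists_omega γ₀ γ₁ γ₂ γ₃ h₀ h₁ h₂ h₃
  have hωne : ω ≠ 0 := ne_of_gt hω
  unfold Hfun at hH
  set s := Real.arctan ((γ₁/ω - γ₃/ω^3) / (γ₀ - γ₂/ω^2)) with hs_def
  have haa := aa_pos h₀ h₂ hω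
  have hbb := bb_pos h₁ h₃ hω
  have hs0 : 0 < s := s_pos h₀ h₁ h₂ h₃ hω
  have hs2 : s < π/2 := Real.arctan_lt_pi_div_two _
  have hcoss : 0 < Real.cos s := Real.cos_arctan_pos _
  have htan : Real.tan s = (γ₁/ω - γ₃/ω^3) / (γ₀ - γ₂/ω^2) := Real.tan_arctan _
  have hcross : Real.sin s * (γ₀ - γ₂/ω^2) = (γ₁/ω - γ₃/ω^3) * Real.cos s := by
    rw [Real.tan_eq_sin_div_cos] at htan
    exact (div_eq_div_iff (ne_of_gt hcoss) (ne_of_gt haa)).mp htan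
  apply main_aux ω ((γ₀ - γ₂/ω^2)/2) ((γ₁/ω - γ₃/ω^3)/2) ((γ₀ + γ₂/ω^2)/2)
    ((γ₁/ω + γ₃/ω^3)/2) γ₀ γ₁ γ₂ γ₃ s hω (by linarith) hs0 hs2
  · ring
  · field_simp; ring
  · field_simp; ring
  · field_simp; ring
  · exact h₀
  · exact h₁
  · exact h₂
  · exact h₃
  · linear_combination (-1/2 : ℝ) * hcross
  · linear_combination hH/2
end

section
/- (Observation 1) Let A > 0 and a ∈ ℝ, and let u : ℝ → ℝ be a smooth function satisfying u''''(x) = −A·u(x) for all x ∈ ℝ, with u(a) > 0, u'(a) > 0, u''(a) > 0, and u'''(a) > 0. Then for each j ∈ {0,1,2,3} the j-th derivative u^{(j)} has a zero in (a,∞), and if x_j denotes the smallest zero of u^{(j)} in (a,∞), then a < x₃ < x₂ < x₁ < x₀ < ∞. -/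
open Real Set


lemma grow_aux {f : ℝ → ℝ} (hf : Differentiable ℝ f) {s t : ℝ}
    (h : ∀ x ∈ Icc s t, 0 ≤ deriv f x) : ∀ x ∈ Icc s t, f s ≤ f x := by
  intro x hx
  have hm : MonotoneOn f (Icc s t) :=
    monotoneOn_of_deriv_nonneg (convex_Icc s t) hf.continuous.continuousOn
      hf.differentiableOn (fun y hy => h y (by rw [interior_Icc] at hy; exact ⟨hy.1.le, hy.2.le⟩))
  exact hm ⟨le_refl s, hx.1.trans hx.2⟩ hx hx.1

lemma decay_aux {f : ℝ → ℝ} (hf : Differentiable ℝ f) {s t c : ℝ}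
    (h : ∀ x ∈ Icc s t, deriv f x ≤ -c) : ∀ x ∈ Icc s t, f x ≤ f s - c * (x - s) := by
  intro x hx
  set g : ℝ → ℝ := fun y => f y + c * y with hg
  have hgd : Differentiable ℝ g := hf.add ((differentiable_id.const_mul c))
  have hgderiv : ∀ y : ℝ, deriv g y = deriv f y + c := by
    intro y
    have : HasDerivAt g (deriv f y + c * 1) y :=
      ((hf y).hasDerivAt).add ((hasDerivAt_id y).const_mul c)
    simpa using this.deriv
  have hm : AntitoneOn g (Icc s t) := by
    refine antitoneOn_of_deriv_nonpos (convex_Icc s t) hgd.continuous.continuousOn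
      hgd.differentiableOn (fun y hy => ?_)
    rw [interior_Icc] at hy
    rw [hgderiv]
    have := h y ⟨hy.1.le, hy.2.le⟩
    linarith
  have := hm ⟨le_refl s, hx.1.trans hx.2⟩ hx hx.1
  simp only [hg] at this
  linarith

lemma cancel_aux {c v s : ℝ} (hc : c ≠ 0) : c * (s + v / c + 1 - s) = v + c := by
  field_simp
  ring

lemma firstZero_aux {f : ℝ → ℝ} (hf : Continuous f) {a s : ℝ} (has : a ≤ s)
    (hpos : ∀ x ∈ Icc a s, 0 < f x) (hex : ∃ w, s < w ∧ f w ≤ 0) :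
    ∃ t, s < t ∧ f t = 0 ∧ (∀ x ∈ Ico a t, 0 < f x) ∧
      sInf {x | a < x ∧ f x = 0} = t := by
  obtain ⟨w, hsw, hw⟩ := hex
  have hfs : 0 < f s := hpos s ⟨has, le_refl s⟩
  set K : Set ℝ := Icc s w ∩ f ⁻¹' {0} with hK
  have hKne : K.Nonempty := by
    rcases eq_or_lt_of_le hw with hw0 | hw0
    · exact ⟨w, ⟨hsw.le, le_refl w⟩, hw0⟩
    · obtain ⟨z, hz, hz0⟩ := intermediate_value_Icc' hsw.le hf.continuousOn
        (show (0:ℝ) ∈ Icc (f w) (f s) from ⟨hw, hfs.le⟩)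
      exact ⟨z, hz, hz0⟩
  have hKcl : IsClosed K := isClosed_Icc.inter (isClosed_singleton.preimage hf)
  have hKbd : BddBelow K := ⟨s, fun x hx => hx.1.1⟩
  set t := sInf K with ht
  have htK : t ∈ K := hKcl.csInf_mem hKne hKbd
  have hft : f t = 0 := htK.2
  have hst : s < t := lt_of_le_of_ne htK.1.1 (fun h => by rw [← h] at hft; exact hfs.ne' hft)
  have hposIco : ∀ x ∈ Ico a t, 0 < f x := by
    intro x hx
    rcases le_or_gt x s with hxs | hxs
    · exact hpos x ⟨hx.1, hxs⟩
    · by_contra hcon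
      push_neg at hcon
      have hz : ∃ z ∈ Icc s x, f z = 0 := by
        rcases eq_or_lt_of_le hcon with h' | h'
        · exact ⟨x, ⟨hxs.le, le_refl x⟩, h'⟩
        · obtain ⟨z, hz, hz0⟩ := intermediate_value_Icc' hxs.le hf.continuousOn
            (show (0:ℝ) ∈ Icc (f x) (f s) from ⟨h'.le, hfs.le⟩)
          exact ⟨z, hz, hz0⟩
      obtain ⟨z, hz, hz0⟩ := hz
      have hzK : z ∈ K := ⟨⟨hz.1, hz.2.trans (hx.2.le.trans htK.1.2)⟩, hz0⟩
      have := csInf_le hKbd hzK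
      have : z < t := lt_of_le_of_lt hz.2 hx.2
      linarith [csInf_le hKbd hzK]
  refine ⟨t, hst, hft, hposIco, ?_⟩
  have htS : t ∈ {x | a < x ∧ f x = 0} := ⟨lt_of_le_of_lt has hst, hft⟩
  refine le_antisymm (csInf_le ⟨a, fun x hx => hx.1.le⟩ htS) (le_csInf ⟨t, htS⟩ ?_)
  intro x hx
  by_contra hcon
  push_neg at hcon
  exact (hposIco x ⟨hx.1.le, hcon⟩).ne' hx.2

set_option maxHeartbeats 1000000

/-- Observation 1: if `u'''' = -A u` with `A > 0` and `u, u', u'', u'''` are all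
positive at `a`, then each derivative `u⁽ʲ⁾`, `j = 0, 1, 2, 3`, vanishes
somewhere in `(a, ∞)`, and the smallest zeros `x_j` (which are themselves zeros)
satisfy `a < x₃ < x₂ < x₁ < x₀`. -/
theorem stmt_7 (A a : ℝ) (hA : 0 < A) (u : ℝ → ℝ)
    (hu : ContDiff ℝ (⊤ : ℕ∞) u)
    (hode : ∀ x : ℝ, iteratedDeriv 4 u x = -A * u x)
    (h0 : 0 < u a) (h1 : 0 < deriv u a)
    (h2 : 0 < iteratedDeriv 2 u a) (h3 : 0 < iteratedDeriv 3 u a) :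
    (∀ j ≤ 3, ∃ x, a < x ∧ iteratedDeriv j u x = 0) ∧
    ∀ xz : ℕ → ℝ,
      (xz = fun j => sInf {x | a < x ∧ iteratedDeriv j u x = 0}) →
      (∀ j ≤ 3, a < xz j ∧ iteratedDeriv j u (xz j) = 0) ∧
      a < xz 3 ∧ xz 3 < xz 2 ∧ xz 2 < xz 1 ∧ xz 1 < xz 0 := by
  have hdiff : ∀ j : ℕ, Differentiable ℝ (iteratedDeriv j u) :=
    fun j => hu.differentiable_iteratedDeriv j (by exact_mod_cast ENat.coe_lt_top j)
  have hcont : ∀ j : ℕ, Continuous (iteratedDeriv j u) := fun j => (hdiff j).continuous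
  have hder' : ∀ j : ℕ, deriv (iteratedDeriv j u) = iteratedDeriv (j+1) u :=
    fun j => iteratedDeriv_succ.symm
  have ha0 : 0 < iteratedDeriv 0 u a := by rwa [iteratedDeriv_zero]
  have ha1 : 0 < iteratedDeriv 1 u a := by rwa [iteratedDeriv_one]
  set c : ℝ := A * u a with hcdef
  have hc : 0 < c := mul_pos hA h0
  have hode3 : ∀ x : ℝ, deriv (iteratedDeriv 3 u) x = -A * iteratedDeriv 0 u x := by
    intro x
    rw [hder' 3, iteratedDeriv_zero, show (3+1 : ℕ) = 4 from rfl]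
    exact hode x
  -- derivative bound for v3 wherever v0 ≥ u a
  have hbnd3 : ∀ x : ℝ, u a ≤ iteratedDeriv 0 u x → deriv (iteratedDeriv 3 u) x ≤ -c := by
    intro x hx
    rw [hode3]
    rw [hcdef]
    nlinarith
  ---- Stage 3 ----
  have E3 : ∃ w, a < w ∧ iteratedDeriv 3 u w ≤ 0 := by
    by_contra hcon
    push_neg at hcon
    have p3 : ∀ x, a ≤ x → 0 ≤ iteratedDeriv 3 u x := by
      intro x hx
      rcases eq_or_lt_of_le hx with h | h
      · rw [← h]; exact h3.le
      · exact (hcon x h).le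
    have p2 : ∀ x, a ≤ x → 0 < iteratedDeriv 2 u x := fun x hx =>
      lt_of_lt_of_le h2 (grow_aux (hdiff 2)
        (fun y hy => by rw [hder' 2]; exact p3 y hy.1) x ⟨hx, le_refl x⟩)
    have p1 : ∀ x, a ≤ x → 0 < iteratedDeriv 1 u x := fun x hx =>
      lt_of_lt_of_le ha1 (grow_aux (hdiff 1)
        (fun y hy => by rw [hder' 1]; exact (p2 y hy.1).le) x ⟨hx, le_refl x⟩)
    have p0 : ∀ x, a ≤ x → u a ≤ iteratedDeriv 0 u x := by
      intro x hx
      have := grow_aux (hdiff 0)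
        (fun y hy => by rw [hder' 0]; exact (p1 y hy.1).le) x ⟨hx, le_refl x⟩
      rwa [show iteratedDeriv 0 u a = u a from by rw [iteratedDeriv_zero]] at this
    set T : ℝ := a + iteratedDeriv 3 u a / c + 1 with hT
    have haT : a < T := by
      have : 0 < iteratedDeriv 3 u a / c := div_pos h3 hc
      rw [hT]; linarith
    have hdec := decay_aux (hdiff 3)
      (fun y hy => hbnd3 y (p0 y hy.1)) T ⟨haT.le, le_refl T⟩
    have : iteratedDeriv 3 u T ≤ -c := by
      rw [hT] at hdec ⊢
      have key : c * (a + iteratedDeriv 3 u a / c + 1 - a)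
          = iteratedDeriv 3 u a + c := by
        calc c * (a + iteratedDeriv 3 u a / c + 1 - a)
            = c * (iteratedDeriv 3 u a / c) + c := by ring
          _ = iteratedDeriv 3 u a + c := by rw [mul_div_cancel₀ _ hc.ne']
      linarith
    linarith [hcon T haT]
  obtain ⟨t₃, ht3a, ht3z, pos3, sInf3⟩ := firstZero_aux (hcont 3) (le_refl a)
    (fun x hx => by rw [le_antisymm hx.2 hx.1]; exact h3) E3
  -- nonnegativity of v3 on [a,t₃]
  have nn3 : ∀ y ∈ Icc a t₃, 0 ≤ iteratedDeriv 3 u y := by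
    intro y hy
    rcases eq_or_lt_of_le hy.2 with h | h
    · rw [h, ht3z]
    · exact (pos3 y ⟨hy.1, h⟩).le
  have q2 : ∀ x ∈ Icc a t₃, iteratedDeriv 2 u a ≤ iteratedDeriv 2 u x :=
    grow_aux (hdiff 2) (fun y hy => by rw [hder' 2]; exact nn3 y hy)
  have q1 : ∀ x ∈ Icc a t₃, iteratedDeriv 1 u a ≤ iteratedDeriv 1 u x :=
    grow_aux (hdiff 1) (fun y hy => by
      rw [hder' 1]; exact le_trans h2.le (q2 y hy))
  have q0 : ∀ x ∈ Icc a t₃, u a ≤ iteratedDeriv 0 u x := by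
    intro x hx
    have := grow_aux (hdiff 0) (fun y hy => by
      rw [hder' 0]; exact le_trans ha1.le (q1 y hy)) x hx
    rwa [show iteratedDeriv 0 u a = u a from by rw [iteratedDeriv_zero]] at this
  ---- Stage 2 ----
  have E2 : ∃ w, t₃ < w ∧ iteratedDeriv 2 u w ≤ 0 := by
    by_contra hcon
    push_neg at hcon
    have p2 : ∀ x, t₃ ≤ x → 0 < iteratedDeriv 2 u x := by
      intro x hx
      rcases eq_or_lt_of_le hx with h | h
      · rw [← h]; exact lt_of_lt_of_le h2 (q2 t₃ ⟨ht3a.le, le_refl t₃⟩)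
      · exact hcon x h
    have p1 : ∀ x, t₃ ≤ x → 0 < iteratedDeriv 1 u x := fun x hx =>
      lt_of_lt_of_le (lt_of_lt_of_le ha1 (q1 t₃ ⟨ht3a.le, le_refl t₃⟩))
        (grow_aux (hdiff 1) (fun y hy => by rw [hder' 1]; exact (p2 y hy.1).le) x
          ⟨hx, le_refl x⟩)
    have p0 : ∀ x, t₃ ≤ x → u a ≤ iteratedDeriv 0 u x := by
      intro x hx
      have := grow_aux (hdiff 0)
        (fun y hy => by rw [hder' 0]; exact (p1 y hy.1).le) x ⟨hx, le_refl x⟩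
      exact le_trans (q0 t₃ ⟨ht3a.le, le_refl t₃⟩) this
    have hv3 : ∀ x, t₃ ≤ x → iteratedDeriv 3 u x ≤ -(c * (x - t₃)) := by
      intro x hx
      have := decay_aux (hdiff 3)
        (fun y (hy : y ∈ Icc t₃ x) => hbnd3 y (p0 y hy.1)) x ⟨hx, le_refl x⟩
      rw [ht3z] at this; linarith
    have hv3w : ∀ y, t₃ + 1 ≤ y → iteratedDeriv 3 u y ≤ -c := by
      intro y hy
      have h1' := hv3 y (by linarith)
      nlinarith [hc]
    have hw2 : 0 < iteratedDeriv 2 u (t₃ + 1) := p2 _ (by linarith)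
    have hwT : t₃ + 1 ≤ t₃ + 1 + iteratedDeriv 2 u (t₃ + 1) / c + 1 := by
      have : 0 < iteratedDeriv 2 u (t₃ + 1) / c := div_pos hw2 hc
      linarith
    have hdec := decay_aux (hdiff 2)
      (fun y (hy : y ∈ Icc (t₃+1) (t₃ + 1 + iteratedDeriv 2 u (t₃ + 1) / c + 1)) => by
        rw [hder' 2]; exact hv3w y hy.1)
      (t₃ + 1 + iteratedDeriv 2 u (t₃ + 1) / c + 1) ⟨hwT, le_refl _⟩
    have key := cancel_aux (c := c) (v := iteratedDeriv 2 u (t₃ + 1)) (s := t₃ + 1) hc.ne'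
    have hbad := hcon (t₃ + 1 + iteratedDeriv 2 u (t₃ + 1) / c + 1) (by linarith)
    linarith
  obtain ⟨t₂, ht2a, ht2z, pos2, sInf2⟩ := firstZero_aux (hcont 2) ht3a.le
    (fun x hx => lt_of_lt_of_le h2 (q2 x hx)) E2
  have hat2 : a < t₂ := ht3a.trans ht2a
  have nn2 : ∀ y ∈ Icc a t₂, 0 ≤ iteratedDeriv 2 u y := by
    intro y hy
    rcases eq_or_lt_of_le hy.2 with h | h
    · rw [h, ht2z]
    · exact (pos2 y ⟨hy.1, h⟩).le
  have r1 : ∀ x ∈ Icc a t₂, iteratedDeriv 1 u a ≤ iteratedDeriv 1 u x :=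
    grow_aux (hdiff 1) (fun y hy => by rw [hder' 1]; exact nn2 y hy)
  have r0 : ∀ x ∈ Icc a t₂, u a ≤ iteratedDeriv 0 u x := by
    intro x hx
    have := grow_aux (hdiff 0) (fun y hy => by
      rw [hder' 0]; exact le_trans ha1.le (r1 y hy)) x hx
    rwa [show iteratedDeriv 0 u a = u a from by rw [iteratedDeriv_zero]] at this
  set c₃ : ℝ := c * (t₂ - t₃) with hc3def
  have hc3 : 0 < c₃ := mul_pos hc (by linarith)
  have hv3t2 : iteratedDeriv 3 u t₂ ≤ -c₃ := by
    have := decay_aux (hdiff 3)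
      (fun y (hy : y ∈ Icc t₃ t₂) =>
        hbnd3 y (r0 y ⟨le_trans ht3a.le hy.1, hy.2⟩)) t₂ ⟨ht2a.le, le_refl t₂⟩
    rw [ht3z] at this; rw [hc3def]; linarith
  ---- Stage 1 ----
  have E1 : ∃ w, t₂ < w ∧ iteratedDeriv 1 u w ≤ 0 := by
    by_contra hcon
    push_neg at hcon
    have p1 : ∀ x, t₂ ≤ x → 0 < iteratedDeriv 1 u x := by
      intro x hx
      rcases eq_or_lt_of_le hx with h | h
      · rw [← h]; exact lt_of_lt_of_le ha1 (r1 t₂ ⟨hat2.le, le_refl t₂⟩)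
      · exact hcon x h
    have p0 : ∀ x, t₂ ≤ x → u a ≤ iteratedDeriv 0 u x := by
      intro x hx
      have := grow_aux (hdiff 0)
        (fun y hy => by rw [hder' 0]; exact (p1 y hy.1).le) x ⟨hx, le_refl x⟩
      exact le_trans (r0 t₂ ⟨hat2.le, le_refl t₂⟩) this
    have hv3 : ∀ x, t₂ ≤ x → iteratedDeriv 3 u x ≤ -c₃ := by
      intro x hx
      have := decay_aux (hdiff 3)
        (fun y (hy : y ∈ Icc t₂ x) => hbnd3 y (p0 y hy.1)) x ⟨hx, le_refl x⟩
      nlinarith [mul_nonneg hc.le (sub_nonneg.mpr hx)]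
    have hv2 : ∀ x, t₂ ≤ x → iteratedDeriv 2 u x ≤ -(c₃ * (x - t₂)) := by
      intro x hx
      have := decay_aux (hdiff 2)
        (fun y (hy : y ∈ Icc t₂ x) => by rw [hder' 2]; exact hv3 y hy.1) x ⟨hx, le_refl x⟩
      rw [ht2z] at this; linarith
    have hv2w : ∀ y, t₂ + 1 ≤ y → iteratedDeriv 2 u y ≤ -c₃ := by
      intro y hy
      have h1' := hv2 y (by linarith)
      nlinarith [hc3]
    have hw1 : 0 < iteratedDeriv 1 u (t₂ + 1) := p1 _ (by linarith)
    have hwT : t₂ + 1 ≤ t₂ + 1 + iteratedDeriv 1 u (t₂ + 1) / c₃ + 1 := by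
      have : 0 < iteratedDeriv 1 u (t₂ + 1) / c₃ := div_pos hw1 hc3
      linarith
    have hdec := decay_aux (hdiff 1)
      (fun y (hy : y ∈ Icc (t₂+1) (t₂ + 1 + iteratedDeriv 1 u (t₂ + 1) / c₃ + 1)) => by
        rw [hder' 1]; exact hv2w y hy.1)
      (t₂ + 1 + iteratedDeriv 1 u (t₂ + 1) / c₃ + 1) ⟨hwT, le_refl _⟩
    have key := cancel_aux (c := c₃) (v := iteratedDeriv 1 u (t₂ + 1)) (s := t₂ + 1) hc3.ne'
    have hbad := hcon (t₂ + 1 + iteratedDeriv 1 u (t₂ + 1) / c₃ + 1) (by linarith)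
    linarith
  obtain ⟨t₁, ht1a, ht1z, pos1, sInf1⟩ := firstZero_aux (hcont 1) hat2.le
    (fun x hx => lt_of_lt_of_le ha1 (r1 x hx)) E1
  have hat1 : a < t₁ := hat2.trans ht1a
  have nn1 : ∀ y ∈ Icc a t₁, 0 ≤ iteratedDeriv 1 u y := by
    intro y hy
    rcases eq_or_lt_of_le hy.2 with h | h
    · rw [h, ht1z]
    · exact (pos1 y ⟨hy.1, h⟩).le
  have s0 : ∀ x ∈ Icc a t₁, u a ≤ iteratedDeriv 0 u x := by
    intro x hx
    have := grow_aux (hdiff 0) (fun y hy => by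
      rw [hder' 0]; exact nn1 y hy) x hx
    rwa [show iteratedDeriv 0 u a = u a from by rw [iteratedDeriv_zero]] at this
  have hv3t1 : ∀ x ∈ Icc t₂ t₁, iteratedDeriv 3 u x ≤ -c₃ := by
    intro x hx
    have := decay_aux (hdiff 3)
      (fun y (hy : y ∈ Icc t₂ x) =>
        hbnd3 y (s0 y ⟨le_trans hat2.le hy.1, le_trans hy.2 hx.2⟩)) x ⟨hx.1, le_refl x⟩
    nlinarith [mul_nonneg hc.le (sub_nonneg.mpr hx.1)]
  set c₂ : ℝ := c₃ * (t₁ - t₂) with hc2def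
  have hc2 : 0 < c₂ := mul_pos hc3 (by linarith)
  have hv2t1 : iteratedDeriv 2 u t₁ ≤ -c₂ := by
    have := decay_aux (hdiff 2)
      (fun y (hy : y ∈ Icc t₂ t₁) => by rw [hder' 2]; exact hv3t1 y hy)
      t₁ ⟨ht1a.le, le_refl t₁⟩
    rw [ht2z] at this; rw [hc2def]; linarith
  ---- Stage 0 ----
  have E0 : ∃ w, t₁ < w ∧ iteratedDeriv 0 u w ≤ 0 := by
    by_contra hcon
    push_neg at hcon
    have p0 : ∀ x, t₁ ≤ x → 0 < iteratedDeriv 0 u x := by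
      intro x hx
      rcases eq_or_lt_of_le hx with h | h
      · rw [← h]; exact lt_of_lt_of_le h0 (s0 t₁ ⟨hat1.le, le_refl t₁⟩)
      · exact hcon x h
    have hv3 : ∀ x, t₁ ≤ x → iteratedDeriv 3 u x ≤ -c₃ := by
      intro x hx
      have := decay_aux (hdiff 3) (c := 0)
        (fun y (hy : y ∈ Icc t₁ x) => by
          rw [hode3]
          have := p0 y hy.1
          nlinarith) x ⟨hx, le_refl x⟩
      have h3t1 := hv3t1 t₁ ⟨ht1a.le, le_refl t₁⟩
      linarith
    have hv2 : ∀ x, t₁ ≤ x → iteratedDeriv 2 u x ≤ -c₂ := by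
      intro x hx
      have := decay_aux (hdiff 2)
        (fun y (hy : y ∈ Icc t₁ x) => by rw [hder' 2]; exact hv3 y hy.1) x ⟨hx, le_refl x⟩
      nlinarith [mul_nonneg hc3.le (sub_nonneg.mpr hx)]
    have hv1 : ∀ x, t₁ ≤ x → iteratedDeriv 1 u x ≤ -(c₂ * (x - t₁)) := by
      intro x hx
      have := decay_aux (hdiff 1)
        (fun y (hy : y ∈ Icc t₁ x) => by rw [hder' 1]; exact hv2 y hy.1) x ⟨hx, le_refl x⟩
      rw [ht1z] at this; linarith
    have hv1w : ∀ y, t₁ + 1 ≤ y → iteratedDeriv 1 u y ≤ -c₂ := by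
      intro y hy
      have h1' := hv1 y (by linarith)
      nlinarith [hc2]
    have hw0 : 0 < iteratedDeriv 0 u (t₁ + 1) := p0 _ (by linarith)
    have hwT : t₁ + 1 ≤ t₁ + 1 + iteratedDeriv 0 u (t₁ + 1) / c₂ + 1 := by
      have : 0 < iteratedDeriv 0 u (t₁ + 1) / c₂ := div_pos hw0 hc2
      linarith
    have hdec := decay_aux (hdiff 0)
      (fun y (hy : y ∈ Icc (t₁+1) (t₁ + 1 + iteratedDeriv 0 u (t₁ + 1) / c₂ + 1)) => by
        rw [hder' 0]; exact hv1w y hy.1)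
      (t₁ + 1 + iteratedDeriv 0 u (t₁ + 1) / c₂ + 1) ⟨hwT, le_refl _⟩
    have key := cancel_aux (c := c₂) (v := iteratedDeriv 0 u (t₁ + 1)) (s := t₁ + 1) hc2.ne'
    have hbad := p0 (t₁ + 1 + iteratedDeriv 0 u (t₁ + 1) / c₂ + 1) (by linarith)
    linarith
  obtain ⟨t₀, ht0a, ht0z, pos0, sInf0⟩ := firstZero_aux (hcont 0) hat1.le
    (fun x hx => lt_of_lt_of_le h0 (s0 x hx)) E0
  have hat0 : a < t₀ := hat1.trans ht0a
  ---- Assembly ----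
  constructor
  · intro j hj
    interval_cases j
    · exact ⟨t₀, hat0, ht0z⟩
    · exact ⟨t₁, hat1, ht1z⟩
    · exact ⟨t₂, hat2, ht2z⟩
    · exact ⟨t₃, ht3a, ht3z⟩
  · intro xz hxz
    have hxz' : ∀ j : ℕ, xz j = sInf {x | a < x ∧ iteratedDeriv j u x = 0} :=
      fun j => by rw [hxz]
    have z0 : xz 0 = t₀ := by rw [hxz' 0]; exact sInf0
    have z1 : xz 1 = t₁ := by rw [hxz' 1]; exact sInf1
    have z2 : xz 2 = t₂ := by rw [hxz' 2]; exact sInf2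
    have z3 : xz 3 = t₃ := by rw [hxz' 3]; exact sInf3
    refine ⟨?_, ?_, ?_, ?_, ?_⟩
    · intro j hj
      interval_cases j
      · rw [z0]; exact ⟨hat0, ht0z⟩
      · rw [z1]; exact ⟨hat1, ht1z⟩
      · rw [z2]; exact ⟨hat2, ht2z⟩
      · rw [z3]; exact ⟨ht3a, ht3z⟩
    · rw [z3]; exact ht3a
    · rw [z3, z2]; exact ht2a
    · rw [z2, z1]; exact ht1a
    · rw [z1, z0]; exact ht0a
end

section
/- Let γ₀ > 0, γ₁ > 0, γ₂ < 0, γ₃ < 0 be fixed. Then there exists B^♯ > 0 such that for every B > B^♯, the solution u(·;B) of u'''' = B u on ℝ with u(0) = γ₀, u'(0) = γ₁, u''(0) = γ₂, u'''(0) = γ₃ satisfies u'(x;B) > 0 for all x ∈ [0,∞). -/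
open Real Set

/-- Comparison: if `g 0 ≤ f 0` and `deriv g ≤ deriv f` on `(0,a)`, then `g ≤ f` on `[0,a]`. -/
lemma stmt9_mono_aux {f g : ℝ → ℝ} {a : ℝ} (hf : Differentiable ℝ f) (hg : Differentiable ℝ g)
    (h0 : g 0 ≤ f 0) (hd : ∀ t ∈ Set.Ioo (0:ℝ) a, deriv g t ≤ deriv f t) :
    ∀ t ∈ Set.Icc (0:ℝ) a, g t ≤ f t := by
  intro t ht
  have hmono : MonotoneOn (fun s => f s - g s) (Set.Icc 0 a) := by
    apply monotoneOn_of_deriv_nonneg (convex_Icc 0 a)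
      ((hf.sub hg).continuous.continuousOn)
      ((hf.sub hg).differentiableOn.mono interior_subset)
    intro x hx
    rw [interior_Icc] at hx
    rw [deriv_sub (hf x) (hg x)]
    linarith [hd x hx]
  have h0mem : (0:ℝ) ∈ Set.Icc (0:ℝ) a := ⟨le_refl 0, le_trans ht.1 ht.2⟩
  have := hmono h0mem ht ht.1
  simp only at this
  linarith

set_option maxHeartbeats 1000000 in
/-- For `γ₀, γ₁ > 0` and `γ₂, γ₃ < 0` there is a threshold `B♯ > 0` such that for
every `B > B♯` the solution of `u'''' = B u` with data `(γ₀, γ₁, γ₂, γ₃)` at `0`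
has `u' > 0` on all of `[0, ∞)`. -/
theorem stmt_9 (γ₀ γ₁ γ₂ γ₃ : ℝ)
    (h₀ : 0 < γ₀) (h₁ : 0 < γ₁) (h₂ : γ₂ < 0) (h₃ : γ₃ < 0) :
    ∃ Bs : ℝ, 0 < Bs ∧
      ∀ B : ℝ, Bs < B →
        ∀ u : ℝ → ℝ, ContDiff ℝ (⊤ : ℕ∞) u →
          (∀ x : ℝ, iteratedDeriv 4 u x = B * u x) →
          u 0 = γ₀ → deriv u 0 = γ₁ →
          iteratedDeriv 2 u 0 = γ₂ → iteratedDeriv 3 u 0 = γ₃ →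
          ∀ x : ℝ, 0 ≤ x → 0 < deriv u x := by
  have hb : 0 < -γ₂ := by linarith
  have hc : 0 < -γ₃ := by linarith
  set δ : ℝ := min (γ₁ / (4 * (-γ₂))) (Real.sqrt (γ₁ / (2 * (-γ₃)))) with hδdef
  have hδpos : 0 < δ := lt_min (by positivity) (Real.sqrt_pos.mpr (by positivity))
  have hδ1 : δ ≤ γ₁ / (4 * (-γ₂)) := min_le_left _ _
  have hδ2 : δ ^ 2 ≤ γ₁ / (2 * (-γ₃)) := by
    have h2 : δ ≤ Real.sqrt (γ₁ / (2 * (-γ₃))) := min_le_right _ _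
    calc δ ^ 2 ≤ Real.sqrt (γ₁ / (2 * (-γ₃))) ^ 2 := by
          apply pow_le_pow_left₀ hδpos.le h2 2
      _ = γ₁ / (2 * (-γ₃)) := Real.sq_sqrt (by positivity)
  clear_value δ
  refine ⟨max 1 (max (12 * (-γ₂) / (γ₀ * δ ^ 2)) (6 * (-γ₃) / (γ₀ * δ))), lt_of_lt_of_le one_pos (le_max_left _ _), ?_⟩
  intro B hB u hu hode hu0 hu1 hu2 hu3
  have hB1 : (1:ℝ) < B := lt_of_le_of_lt (le_max_left _ _) hB
  have hBpos : 0 < B := by linarith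
  have hBb : 12 * (-γ₂) / (γ₀ * δ ^ 2) < B :=
    lt_of_le_of_lt (le_trans (le_max_left _ _) (le_max_right _ _)) hB
  have hBc : 6 * (-γ₃) / (γ₀ * δ) < B :=
    lt_of_le_of_lt (le_trans (le_max_right _ _) (le_max_right _ _)) hB
  have hBb' : 12 * (-γ₂) < B * (γ₀ * δ ^ 2) := (div_lt_iff₀ (by positivity)).mp hBb
  have hBc' : 6 * (-γ₃) < B * (γ₀ * δ) := (div_lt_iff₀ (by positivity)).mp hBc
  -- the cubic lower bound is positive for all x ≥ 0
  have hp : ∀ x : ℝ, 0 ≤ x → 0 < γ₁ + γ₂ * x + γ₃ * x ^ 2 / 2 + B * γ₀ * x ^ 3 / 6 := by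
    intro x hx
    rcases le_or_gt x δ with hxδ | hxδ
    · have e1 : -γ₂ * x ≤ γ₁ / 4 := by
        have : -γ₂ * x ≤ -γ₂ * δ := by nlinarith
        have : -γ₂ * δ ≤ γ₁ / 4 := by
          rw [le_div_iff₀ (by positivity : (0:ℝ) < 4 * (-γ₂))] at hδ1
          nlinarith
        linarith [mul_le_mul_of_nonneg_left hxδ hb.le]
      have e2 : -γ₃ * x ^ 2 / 2 ≤ γ₁ / 4 := by
        have hx2 : x ^ 2 ≤ δ ^ 2 := pow_le_pow_left₀ hx hxδ 2
        have : δ ^ 2 ≤ γ₁ / (2 * (-γ₃)) := hδ2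
        rw [le_div_iff₀ (by positivity : (0:ℝ) < 2 * (-γ₃))] at this
        nlinarith
      nlinarith [pow_nonneg hx 3, mul_nonneg (mul_nonneg hBpos.le h₀.le) (pow_nonneg hx 3)]
    · -- x > δ : the cubic term dominates
      have hxsq : δ ^ 2 ≤ x ^ 2 := by nlinarith
      have hx3a : δ ^ 2 * x ≤ x ^ 3 := by nlinarith [mul_le_mul_of_nonneg_left hxsq hx]
      have hx3b : δ * x ^ 2 ≤ x ^ 3 := by nlinarith [mul_le_mul_of_nonneg_left hxδ.le (sq_nonneg x)]
      have f1 : 12 * (-γ₂) * x < B * (γ₀ * δ ^ 2) * x := by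
        apply mul_lt_mul_of_pos_right hBb' (by linarith)
      have f2 : 6 * (-γ₃) * x ^ 2 < B * (γ₀ * δ) * x ^ 2 := by
        apply mul_lt_mul_of_pos_right hBc' (pow_pos (by linarith) 2)
      have g1 : B * (γ₀ * δ ^ 2) * x ≤ B * γ₀ * x ^ 3 := by nlinarith
      have g2 : B * (γ₀ * δ) * x ^ 2 ≤ B * γ₀ * x ^ 3 := by nlinarith
      nlinarith
  -- differentiability facts
  have hud : ∀ n : ℕ, Differentiable ℝ (iteratedDeriv n u) := fun n =>
    hu.differentiable_iteratedDeriv n (by exact_mod_cast ENat.coe_lt_top n)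
  have hd1 : deriv u = iteratedDeriv 1 u := (iteratedDeriv_one (f := u)).symm
  have hdsucc : ∀ n : ℕ, deriv (iteratedDeriv n u) = iteratedDeriv (n + 1) u :=
    fun n => (iteratedDeriv_succ (n := n)).symm
  have hderivu : Differentiable ℝ (deriv u) := hd1 ▸ hud 1
  by_contra hcon
  push_neg at hcon
  obtain ⟨x₁, hx₁0, hx₁le⟩ := hcon
  -- smallest bad point
  set S : Set ℝ := {x : ℝ | 0 ≤ x ∧ deriv u x ≤ 0} with hSdef
  have hSne : S.Nonempty := ⟨x₁, hx₁0, hx₁le⟩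
  have hSclosed : IsClosed S := by
    have : S = Set.Ici (0:ℝ) ∩ {x | deriv u x ≤ 0} := by
      ext x; simp [hSdef, Set.mem_Ici]
    rw [this]
    exact isClosed_Ici.inter (isClosed_le hderivu.continuous continuous_const)
  have hSbdd : BddBelow S := ⟨0, fun x hx => hx.1⟩
  set x₀ : ℝ := sInf S with hx₀def
  have hx₀mem : x₀ ∈ S := hSclosed.csInf_mem hSne hSbdd
  have hx₀nonneg : 0 ≤ x₀ := hx₀mem.1
  have hx₀pos : 0 < x₀ := by
    rcases eq_or_lt_of_le hx₀nonneg with h | h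
    · exfalso; have := hx₀mem.2; rw [← h] at this; rw [hu1] at this; linarith
    · exact h
  have hpos : ∀ t : ℝ, 0 ≤ t → t < x₀ → 0 < deriv u t := by
    intro t ht0 htx₀
    by_contra hle
    push_neg at hle
    have : x₀ ≤ t := csInf_le hSbdd ⟨ht0, hle⟩
    linarith
  -- u is monotone on [0, x₀], hence u ≥ γ₀ there
  have humono : ∀ t ∈ Set.Icc (0:ℝ) x₀, γ₀ ≤ u t := by
    have := stmt9_mono_aux (f := u) (g := fun _ => γ₀) (a := x₀) (hu.differentiable (by simp))
      (differentiable_const γ₀) (by simp [hu0]) ?_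
    · intro t ht; exact this t ht
    · intro t ht
      rw [deriv_const]
      exact (hpos t ht.1.le ht.2).le
  -- iteratedDeriv 3 u t ≥ γ₃ + B γ₀ t
  have h3 : ∀ t ∈ Set.Icc (0:ℝ) x₀, γ₃ + B * γ₀ * t ≤ iteratedDeriv 3 u t := by
    apply stmt9_mono_aux (hud 3)
    · exact (differentiable_const γ₃).add ((differentiable_id.const_mul (B * γ₀)))
    · simp [hu3]
    · intro t ht
      have hq : HasDerivAt (fun s => γ₃ + B * γ₀ * s) (B * γ₀) t := by
        simpa using ((hasDerivAt_id t).const_mul (B * γ₀)).const_add γ₃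
      rw [hq.deriv, hdsucc 3]
      rw [hode t]
      have := humono t ⟨ht.1.le, ht.2.le⟩
      nlinarith
  -- iteratedDeriv 2 u t ≥ γ₂ + γ₃ t + B γ₀ t²/2
  have h2' : ∀ t ∈ Set.Icc (0:ℝ) x₀,
      γ₂ + γ₃ * t + B * γ₀ * t ^ 2 / 2 ≤ iteratedDeriv 2 u t := by
    apply stmt9_mono_aux (hud 2)
    · apply Differentiable.add
      apply Differentiable.add (differentiable_const γ₂) (differentiable_id.const_mul γ₃)
      exact ((differentiable_pow 2).const_mul (B * γ₀)).div_const 2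
    · simp [hu2]
    · intro t ht
      have hq : HasDerivAt (fun s => γ₂ + γ₃ * s + B * γ₀ * s ^ 2 / 2) (γ₃ + B * γ₀ * t) t := by
        have h := (((hasDerivAt_id t).const_mul γ₃).const_add γ₂).add
          (((hasDerivAt_pow 2 t).const_mul (B * γ₀)).div_const 2)
        exact h.congr_deriv (by norm_num <;> ring)
      rw [hq.deriv, hdsucc 2]
      exact h3 t ⟨ht.1.le, ht.2.le⟩
  -- deriv u t ≥ γ₁ + γ₂ t + γ₃ t²/2 + B γ₀ t³/6
  have h1' : ∀ t ∈ Set.Icc (0:ℝ) x₀,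
      γ₁ + γ₂ * t + γ₃ * t ^ 2 / 2 + B * γ₀ * t ^ 3 / 6 ≤ deriv u t := by
    apply stmt9_mono_aux hderivu
    · apply Differentiable.add
      apply Differentiable.add
      apply Differentiable.add (differentiable_const γ₁) (differentiable_id.const_mul γ₂)
      exact ((differentiable_pow 2).const_mul γ₃).div_const 2
      exact ((differentiable_pow 3).const_mul (B * γ₀)).div_const 6
    · simp [hu1]
    · intro t ht
      have hq : HasDerivAt (fun s => γ₁ + γ₂ * s + γ₃ * s ^ 2 / 2 + B * γ₀ * s ^ 3 / 6)
          (γ₂ + γ₃ * t + B * γ₀ * t ^ 2 / 2) t := by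
        have h := ((((hasDerivAt_id t).const_mul γ₂).const_add γ₁).add
          (((hasDerivAt_pow 2 t).const_mul γ₃).div_const 2)).add
          (((hasDerivAt_pow 3 t).const_mul (B * γ₀)).div_const 6)
        exact h.congr_deriv (by norm_num <;> ring)
      rw [hq.deriv]
      have : deriv (deriv u) t = iteratedDeriv 2 u t := by
        rw [hd1, hdsucc 1]
      rw [this]
      exact h2' t ⟨ht.1.le, ht.2.le⟩
  have hfinal := h1' x₀ ⟨hx₀nonneg, le_refl x₀⟩
  have := hp x₀ hx₀nonneg
  linarith [hx₀mem.2]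
end

section
/- Let γ₀ > 0, γ₁ > 0, γ₂ < 0, γ₃ < 0 be fixed. Then there exists B^♯ > 0 such that for every B > B^♯, the solution u(·;B) of u'''' = B u with u(0) = γ₀, u'(0) = γ₁, u''(0) = γ₂, u'''(0) = γ₃ satisfies: u'(x;B) > 0 for all x ≥ 0 (hence u(x;B) ≥ γ₀ > 0 for all x ≥ 0); u'''(·;B) is strictly increasing on [0,∞) and has exactly one zero z₃ ∈ (0,∞); u''(·;B) is strictly decreasing on [0,z₃] and strictly increasing on [z₃,∞); and u''(·;B) has a zero z₂ with z₃ < z₂ < ∞. -/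
open Real Set

lemma aux_nonneg_prop {X : ℝ} {f f' : ℝ → ℝ}
    (hd : ∀ t, HasDerivAt f (f' t) t) (h0 : f 0 = 0)
    (hge : ∀ t ∈ Ioo (0:ℝ) X, 0 ≤ f' t) : ∀ t ∈ Icc (0:ℝ) X, 0 ≤ f t := by
  intro t ht
  have hmono : MonotoneOn f (Icc 0 X) := by
    apply monotoneOn_of_deriv_nonneg (convex_Icc _ _)
    · exact fun x _ => (hd x).continuousAt.continuousWithinAt
    · exact fun x _ => (hd x).differentiableAt.differentiableWithinAt
    · intro x hx
      rw [interior_Icc] at hx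
      rw [(hd x).deriv]
      exact hge x hx
  have h := hmono ⟨le_refl 0, ht.1.trans ht.2⟩ ht ht.1
  rw [h0] at h
  exact h

lemma aux_cubic_pos (c₀ c₁ c₂ : ℝ) (h : 0 < c₀) :
    ∃ K₀ : ℝ, 0 < K₀ ∧ ∀ K : ℝ, K₀ ≤ K → ∀ t : ℝ, 0 ≤ t →
      0 < c₀ + c₁ * t + c₂ * t ^ 2 + K * t ^ 3 := by
  set δ : ℝ := min 1 (c₀ / (2 * (|c₁| + |c₂| + 1))) with hδdef
  have hδ0 : 0 < δ := lt_min one_pos (by positivity)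
  have hδ1 : δ ≤ 1 := min_le_left _ _
  have hδ2 : δ * (|c₁| + |c₂| + 1) ≤ c₀ / 2 := by
    have h2 : δ ≤ c₀ / (2 * (|c₁| + |c₂| + 1)) := min_le_right _ _
    rw [le_div_iff₀ (by positivity)] at h2
    nlinarith
  refine ⟨(2 * |c₁| + 2 * |c₂| + 1) / δ ^ 2, by positivity, ?_⟩
  intro K hK t ht
  have hK0 : 0 < K := lt_of_lt_of_le (by positivity) hK
  have habs1 : -|c₁| ≤ c₁ := neg_abs_le c₁
  have habs2 : -|c₂| ≤ c₂ := neg_abs_le c₂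
  have ha1 : 0 ≤ |c₁| := abs_nonneg c₁
  have ha2 : 0 ≤ |c₂| := abs_nonneg c₂
  rcases le_or_gt t δ with h1 | h1
  · have e1 : |c₁| * t ≤ |c₁| * δ := mul_le_mul_of_nonneg_left h1 ha1
    have e2 : |c₂| * t ^ 2 ≤ |c₂| * δ := by nlinarith [mul_le_mul h1 h1 ht hδ0.le, mul_le_mul_of_nonneg_left hδ1 (mul_nonneg ha2 hδ0.le)]
    nlinarith [mul_nonneg (mul_nonneg hK0.le (mul_nonneg ht ht)) ht]
  · have hδle : δ ≤ t := h1.le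
    have hKδ : 2 * |c₁| + 2 * |c₂| ≤ K * δ ^ 2 := by
      rw [div_le_iff₀ (by positivity)] at hK
      nlinarith
    have hKδ2 : 2 * |c₁| ≤ K * δ ^ 2 := by linarith
    have hKδ1 : 2 * |c₂| ≤ K * δ := by nlinarith
    nlinarith [mul_nonneg (mul_nonneg hK0.le (sub_nonneg.2 hδle)) (sq_nonneg t),
      mul_nonneg (mul_nonneg hK0.le (by nlinarith : (0:ℝ) ≤ t ^ 2 - δ ^ 2)) ht,
      mul_nonneg (sub_nonneg.2 hKδ1) (sq_nonneg t),
      mul_nonneg (sub_nonneg.2 hKδ2) ht,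
      mul_nonneg ha1 ht, mul_nonneg ha2 (sq_nonneg t)]


set_option maxHeartbeats 1000000 in
/-- Part I of the proof of Lemma 1: for `B` large, the solution `u` of
`u'''' = B u` with data `(γ₀, γ₁, γ₂, γ₃)` (`γ₀, γ₁ > 0`, `γ₂, γ₃ < 0`) has
`u' > 0` on `[0, ∞)` (hence `u ≥ γ₀`), `u'''` is strictly increasing with a
unique zero `z₃ ∈ (0, ∞)`, `u''` strictly decreases on `[0, z₃]`, strictly
increases on `[z₃, ∞)`, and has a zero `z₂ > z₃`. -/
theorem stmt_10 (γ₀ γ₁ γ₂ γ₃ : ℝ)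
    (h₀ : 0 < γ₀) (h₁ : 0 < γ₁) (h₂ : γ₂ < 0) (h₃ : γ₃ < 0) :
    ∃ Bs : ℝ, 0 < Bs ∧
      ∀ B : ℝ, Bs < B →
        ∀ u : ℝ → ℝ, ContDiff ℝ (⊤ : ℕ∞) u →
          (∀ x : ℝ, iteratedDeriv 4 u x = B * u x) →
          u 0 = γ₀ → deriv u 0 = γ₁ →
          iteratedDeriv 2 u 0 = γ₂ → iteratedDeriv 3 u 0 = γ₃ →
          (∀ x : ℝ, 0 ≤ x → 0 < deriv u x) ∧
          (∀ x : ℝ, 0 ≤ x → γ₀ ≤ u x) ∧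
          StrictMonoOn (iteratedDeriv 3 u) (Ici 0) ∧
          ∃ z₃ : ℝ, 0 < z₃ ∧ iteratedDeriv 3 u z₃ = 0 ∧
            (∀ x : ℝ, 0 < x → iteratedDeriv 3 u x = 0 → x = z₃) ∧
            StrictAntiOn (iteratedDeriv 2 u) (Icc 0 z₃) ∧
            StrictMonoOn (iteratedDeriv 2 u) (Ici z₃) ∧
            ∃ z₂ : ℝ, z₃ < z₂ ∧ iteratedDeriv 2 u z₂ = 0 := by
  obtain ⟨K₁, hK₁pos, hP⟩ := aux_cubic_pos γ₁ γ₂ (γ₃/2) h₁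
  obtain ⟨K₂, hK₂pos, hR⟩ := aux_cubic_pos γ₁ (γ₂/2) (γ₃/6) h₁
  refine ⟨1 + 6*K₁/γ₀ + 24*K₂/γ₀, by positivity, ?_⟩
  intro B hB u hu hode hu0 hd0 h2v h3v
  have hB0 : 0 < B := lt_of_lt_of_le (by positivity) hB.le
  have hBγ : 0 < B * γ₀ := mul_pos hB0 h₀
  have hBK1 : K₁ ≤ B * γ₀ / 6 := by
    rw [le_div_iff₀ (by norm_num : (0:ℝ) < 6)]
    have e : 6*K₁/γ₀ * γ₀ = 6*K₁ := div_mul_cancel₀ _ h₀.ne'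
    nlinarith [mul_lt_mul_of_pos_right hB h₀, mul_pos (by positivity : (0:ℝ) < 24*K₂/γ₀) h₀]
  have hBK2 : K₂ ≤ B * γ₀ / 24 := by
    rw [le_div_iff₀ (by norm_num : (0:ℝ) < 24)]
    have e : 24*K₂/γ₀ * γ₀ = 24*K₂ := div_mul_cancel₀ _ h₀.ne'
    nlinarith [mul_lt_mul_of_pos_right hB h₀, mul_pos (by positivity : (0:ℝ) < 6*K₁/γ₀) h₀]
  -- derivative setup
  have hu' : ContDiff ℝ ((⊤ : ℕ∞) : WithTop ℕ∞) u := hu.of_le (by simp)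
  have hcd1 : ContDiff ℝ ((⊤ : ℕ∞) : WithTop ℕ∞) (deriv u) := (contDiff_infty_iff_deriv.mp hu').2
  have hcd2 : ContDiff ℝ ((⊤ : ℕ∞) : WithTop ℕ∞) (deriv (deriv u)) := (contDiff_infty_iff_deriv.mp hcd1).2
  have hcd3 : ContDiff ℝ ((⊤ : ℕ∞) : WithTop ℕ∞) (deriv (deriv (deriv u))) := (contDiff_infty_iff_deriv.mp hcd2).2
  set u1 : ℝ → ℝ := deriv u with hu1def
  set U2 : ℝ → ℝ := deriv (deriv u) with hU2def
  set U3 : ℝ → ℝ := deriv (deriv (deriv u)) with hU3def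
  have e2 : iteratedDeriv 2 u = U2 := by
    rw [iteratedDeriv_succ, iteratedDeriv_one]
  have e3 : iteratedDeriv 3 u = U3 := by
    rw [iteratedDeriv_succ, e2]
  have e4 : iteratedDeriv 4 u = deriv U3 := by
    rw [iteratedDeriv_succ, e3]
  rw [e2] at h2v
  rw [e3] at h3v
  have hD0 : ∀ x, HasDerivAt u (u1 x) x := fun x => ((hu'.differentiable (by simp)) x).hasDerivAt
  have hD1 : ∀ x, HasDerivAt u1 (U2 x) x := fun x => ((hcd1.differentiable (by simp)) x).hasDerivAt
  have hD2 : ∀ x, HasDerivAt U2 (U3 x) x := fun x => ((hcd2.differentiable (by simp)) x).hasDerivAt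
  have hD3 : ∀ x, HasDerivAt U3 (B * u x) x := fun x => by
    have h := ((hcd3.differentiable (by simp)) x).hasDerivAt
    rwa [show deriv U3 x = B * u x from by rw [← e4]; exact hode x] at h
  -- derivative computations for defect functions
  have hf3 : ∀ x, HasDerivAt (fun t => U3 t - (γ₃ + B*γ₀*t)) (B * u x - B*γ₀) x := by
    intro x
    have hp : HasDerivAt (fun t : ℝ => γ₃ + B*γ₀*t) (B*γ₀) x := by
      simpa using ((hasDerivAt_id x).const_mul (B*γ₀)).const_add γ₃
    exact (hD3 x).sub hp
  have hf2 : ∀ x, HasDerivAt (fun t => U2 t - (γ₂ + γ₃*t + B*γ₀*t^2/2))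
      (U3 x - (γ₃ + B*γ₀*x)) x := by
    intro x
    have hp : HasDerivAt (fun t : ℝ => γ₂ + γ₃*t + B*γ₀*t^2/2) (γ₃ + B*γ₀*x) x := by
      have h := ((hasDerivAt_const x γ₂).add ((hasDerivAt_id x).const_mul γ₃)).add
        (((hasDerivAt_pow 2 x).const_mul (B*γ₀)).div_const 2)
      refine h.congr_deriv ?_
      push_cast; ring
    exact (hD2 x).sub hp
  have hf1 : ∀ x, HasDerivAt (fun t => u1 t - (γ₁ + γ₂*t + γ₃*t^2/2 + B*γ₀*t^3/6))
      (U2 x - (γ₂ + γ₃*x + B*γ₀*x^2/2)) x := by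
    intro x
    have hp : HasDerivAt (fun t : ℝ => γ₁ + γ₂*t + γ₃*t^2/2 + B*γ₀*t^3/6)
        (γ₂ + γ₃*x + B*γ₀*x^2/2) x := by
      have h := (((hasDerivAt_const x γ₁).add ((hasDerivAt_id x).const_mul γ₂)).add
        (((hasDerivAt_pow 2 x).const_mul γ₃).div_const 2)).add
        (((hasDerivAt_pow 3 x).const_mul (B*γ₀)).div_const 6)
      refine h.congr_deriv ?_
      push_cast; ring
    exact (hD1 x).sub hp
  have hf0 : ∀ x, HasDerivAt (fun t => u t - (γ₀ + γ₁*t + γ₂*t^2/2 + γ₃*t^3/6 + B*γ₀*t^4/24))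
      (u1 x - (γ₁ + γ₂*x + γ₃*x^2/2 + B*γ₀*x^3/6)) x := by
    intro x
    have hp : HasDerivAt (fun t : ℝ => γ₀ + γ₁*t + γ₂*t^2/2 + γ₃*t^3/6 + B*γ₀*t^4/24)
        (γ₁ + γ₂*x + γ₃*x^2/2 + B*γ₀*x^3/6) x := by
      have h := ((((hasDerivAt_const x γ₀).add ((hasDerivAt_id x).const_mul γ₁)).add
        (((hasDerivAt_pow 2 x).const_mul γ₂).div_const 2)).add
        (((hasDerivAt_pow 3 x).const_mul γ₃).div_const 6)).add
        (((hasDerivAt_pow 4 x).const_mul (B*γ₀)).div_const 24)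
      refine h.congr_deriv ?_
      push_cast; ring
    exact (hD0 x).sub hp
  -- cascading lower bounds
  have key : ∀ X : ℝ, (∀ t, 0 < t → t < X → γ₀ ≤ u t) → ∀ t, 0 ≤ t → t ≤ X →
      γ₃ + B*γ₀*t ≤ U3 t ∧ γ₂ + γ₃*t + B*γ₀*t^2/2 ≤ U2 t ∧
      γ₁ + γ₂*t + γ₃*t^2/2 + B*γ₀*t^3/6 ≤ u1 t ∧
      γ₀ + γ₁*t + γ₂*t^2/2 + γ₃*t^3/6 + B*γ₀*t^4/24 ≤ u t := by
    intro X hX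
    have H3 := aux_nonneg_prop hf3 (by simp [h3v]) (fun t ht => by
      have := hX t ht.1 ht.2; nlinarith)
    have H2 := aux_nonneg_prop hf2 (by simp [h2v]) (fun t ht =>
      H3 t (Ioo_subset_Icc_self ht))
    have H1 := aux_nonneg_prop hf1 (by simp [hd0]) (fun t ht =>
      H2 t (Ioo_subset_Icc_self ht))
    have H0 := aux_nonneg_prop hf0 (by simp [hu0]) (fun t ht =>
      H1 t (Ioo_subset_Icc_self ht))
    intro t ht1 ht2
    have h3 := H3 t ⟨ht1, ht2⟩
    have h2 := H2 t ⟨ht1, ht2⟩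
    have h1 := H1 t ⟨ht1, ht2⟩
    have h0 := H0 t ⟨ht1, ht2⟩
    refine ⟨by linarith, by linarith, by linarith, by linarith⟩
  -- positivity near 0
  have hεex : ∃ ε > (0:ℝ), ∀ t, 0 < t → t ≤ ε → γ₀ < u t := by
    have hc : ContinuousAt u1 0 := hcd1.continuous.continuousAt
    have hpos0 : (0:ℝ) < u1 0 := by rw [← hd0] at h₁; exact h₁
    have hev : ∀ᶠ x in nhds (0:ℝ), 0 < u1 x := hc.eventually (eventually_gt_nhds hpos0)
    obtain ⟨ε, hε, hball⟩ := Metric.eventually_nhds_iff.mp hev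
    refine ⟨ε/2, by positivity, fun t ht1 ht2 => ?_⟩
    have hmono : StrictMonoOn u (Icc 0 (ε/2)) := by
      apply strictMonoOn_of_deriv_pos (convex_Icc _ _) (hu.continuous.continuousOn)
      intro x hx
      rw [interior_Icc] at hx
      exact hball (by rw [Real.dist_eq, sub_zero, abs_of_pos hx.1]; linarith [hx.2, hε])
    have := hmono ⟨le_refl 0, by linarith⟩ ⟨ht1.le, ht2⟩ ht1
    rwa [hu0] at this
  obtain ⟨ε, hε, hεpos⟩ := hεex
  -- bootstrap: u ≥ γ₀ on [0,∞)
  have Hu : ∀ t, 0 ≤ t → γ₀ ≤ u t := by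
    by_contra hcon
    push_neg at hcon
    obtain ⟨s₀, hs₀, hus₀⟩ := hcon
    set S : Set ℝ := {t | 0 ≤ t ∧ u t < γ₀} with hSdef
    have hSne : S.Nonempty := ⟨s₀, hs₀, hus₀⟩
    have hSbdd : BddBelow S := ⟨0, fun s hs => hs.1⟩
    set x₀ := sInf S with hx₀def
    have hx₀lb : ε ≤ x₀ := by
      apply le_csInf hSne
      intro s hs
      by_contra hlt
      push_neg at hlt
      rcases eq_or_lt_of_le hs.1 with h | h
      · have hss := hs.2; rw [← h, hu0] at hss; exact absurd hss (lt_irrefl _)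
      · exact absurd hs.2 (not_lt.2 (hεpos s h hlt.le).le)
    have hx₀pos : 0 < x₀ := lt_of_lt_of_le hε hx₀lb
    have hx₀cl : u x₀ ≤ γ₀ := by
      have h1 : x₀ ∈ closure S := csInf_mem_closure hSne hSbdd
      have hcl : closure S ⊆ {t : ℝ | u t ≤ γ₀} :=
        closure_minimal (fun s hs => hs.2.le) (isClosed_le hu.continuous continuous_const)
      exact hcl h1
    have hbelow : ∀ t, 0 < t → t < x₀ → γ₀ ≤ u t := by
      intro t ht1 ht2
      by_contra h
      push_neg at h
      exact absurd (csInf_le hSbdd ⟨ht1.le, h⟩) (not_le.2 ht2)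
    have hKb := (key x₀ hbelow x₀ hx₀pos.le le_rfl).2.2.2
    have hr := hR (B*γ₀/24) hBK2 x₀ hx₀pos.le
    nlinarith [mul_pos hx₀pos hr]
  -- main bounds everywhere
  have Hb : ∀ t, 0 ≤ t → γ₃ + B*γ₀*t ≤ U3 t ∧ γ₂ + γ₃*t + B*γ₀*t^2/2 ≤ U2 t ∧
      γ₁ + γ₂*t + γ₃*t^2/2 + B*γ₀*t^3/6 ≤ u1 t ∧
      γ₀ + γ₁*t + γ₂*t^2/2 + γ₃*t^3/6 + B*γ₀*t^4/24 ≤ u t :=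
    fun t ht => key t (fun s hs _ => Hu s hs.le) t ht le_rfl
  -- strict monotonicity of U3
  have smono3 : StrictMonoOn U3 (Ici (0:ℝ)) := by
    apply strictMonoOn_of_deriv_pos (convex_Ici 0) (hcd3.continuous.continuousOn)
    intro x hx
    rw [interior_Ici] at hx
    rw [(hD3 x).deriv]
    exact mul_pos hB0 (h₀.trans_le (Hu x hx.le))
  -- existence of z₃
  set t₁ : ℝ := (1 - γ₃)/(B*γ₀) with ht₁def
  have ht₁pos : 0 < t₁ := div_pos (by linarith) hBγ
  have hU3t₁ : (0:ℝ) ≤ U3 t₁ := by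
    have h := (Hb t₁ ht₁pos.le).1
    have he : B*γ₀*t₁ = 1 - γ₃ := by
      rw [ht₁def, mul_div_cancel₀ _ hBγ.ne']
    linarith
  obtain ⟨z₃, hz₃mem, hz₃⟩ := intermediate_value_Icc ht₁pos.le
    (hcd3.continuous.continuousOn) (show (0:ℝ) ∈ Icc (U3 0) (U3 t₁) from ⟨by rw [h3v]; linarith, hU3t₁⟩)
  have hz₃pos : 0 < z₃ := by
    rcases eq_or_lt_of_le hz₃mem.1 with h | h
    · rw [← h, h3v] at hz₃; linarith
    · exact h
  rw [e2, e3]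
  refine ⟨?_, fun x hx => Hu x hx, smono3, z₃, hz₃pos, hz₃, ?_, ?_, ?_, ?_⟩
  · -- deriv u > 0
    intro x hx
    have h := (Hb x hx).2.2.1
    have hp' := hP (B*γ₀/6) hBK1 x hx
    show 0 < u1 x
    nlinarith
  · -- uniqueness of zero of U3
    intro x hx hx0
    exact smono3.injOn (le_of_lt hx) hz₃mem.1 (by rw [hx0, hz₃])
  · -- U2 strict anti on [0, z₃]
    apply strictAntiOn_of_deriv_neg (convex_Icc _ _) (hcd2.continuous.continuousOn)
    intro x hx
    rw [interior_Icc] at hx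
    rw [(hD2 x).deriv]
    have := smono3 (le_of_lt hx.1 : (0:ℝ) ≤ x) hz₃mem.1 hx.2
    rw [hz₃] at this
    exact this
  · -- U2 strict mono on [z₃, ∞)
    apply strictMonoOn_of_deriv_pos (convex_Ici _) (hcd2.continuous.continuousOn)
    intro x hx
    rw [interior_Ici] at hx
    rw [(hD2 x).deriv]
    have := smono3 hz₃mem.1 (le_of_lt (hz₃pos.trans hx)) hx
    rw [hz₃] at this
    exact this
  · -- existence of z₂
    have hanti : StrictAntiOn U2 (Icc 0 z₃) := by
      apply strictAntiOn_of_deriv_neg (convex_Icc _ _) (hcd2.continuous.continuousOn)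
      intro x hx
      rw [interior_Icc] at hx
      rw [(hD2 x).deriv]
      have := smono3 (le_of_lt hx.1 : (0:ℝ) ≤ x) hz₃mem.1 hx.2
      rw [hz₃] at this
      exact this
    have hU2z₃ : U2 z₃ < 0 := by
      have := hanti ⟨le_refl 0, hz₃pos.le⟩ ⟨hz₃pos.le, le_refl z₃⟩ hz₃pos
      rw [h2v] at this
      linarith
    set T : ℝ := max (z₃ + 1) (max 1 (2*(|γ₂| + |γ₃| + 1)/(B*γ₀))) with hTdef
    have hT1 : (1:ℝ) ≤ T := le_trans (le_max_left _ _) (le_max_right _ _)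
    have hTz : z₃ + 1 ≤ T := le_max_left _ _
    have hTd : 2*(|γ₂| + |γ₃| + 1)/(B*γ₀) ≤ T := le_trans (le_max_right _ _) (le_max_right _ _)
    have hTub : 2*(|γ₂| + |γ₃| + 1) ≤ B*γ₀*T := by
      rw [div_le_iff₀ hBγ] at hTd
      linarith [hTd]
    have hU2T : 0 < U2 T := by
      have h := (Hb T (by linarith)).2.1
      have habs2 : -|γ₂| ≤ γ₂ := neg_abs_le γ₂
      have habs3 : -|γ₃| ≤ γ₃ := neg_abs_le γ₃
      have ha2 : 0 ≤ |γ₂| := abs_nonneg γ₂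
      have ha3 : 0 ≤ |γ₃| := abs_nonneg γ₃
      have hT0 : (0:ℝ) ≤ T := by linarith
      have m1 : 2*(|γ₂| + |γ₃| + 1) * T ≤ B*γ₀*T * T := mul_le_mul_of_nonneg_right hTub hT0
      have m2 : |γ₂| * 1 ≤ |γ₂| * T := mul_le_mul_of_nonneg_left hT1 ha2
      have m3 : -|γ₃| * T ≤ γ₃ * T := mul_le_mul_of_nonneg_right habs3 hT0
      linarith [m1, m2, m3]
    obtain ⟨z₂, hz₂mem, hz₂⟩ := intermediate_value_Icc (by linarith : z₃ ≤ T)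
      (hcd2.continuous.continuousOn) (show (0:ℝ) ∈ Icc (U2 z₃) (U2 T) from ⟨hU2z₃.le, hU2T.le⟩)
    refine ⟨z₂, ?_, hz₂⟩
    rcases eq_or_lt_of_le hz₂mem.1 with h | h
    · rw [← h] at hz₂; rw [hz₂] at hU2z₃; exact absurd hU2z₃ (lt_irrefl 0)
    · exact h
end

section
/- Let γ₀ > 0, γ₁ > 0, γ₂ < 0, γ₃ < 0 be fixed. Then there exists B^♭ > 0 such that for every B with 0 < B < B^♭, the solution u(·;B) of u'''' = B u with u(0) = γ₀, u'(0) = γ₁, u''(0) = γ₂, u'''(0) = γ₃ satisfies: (i) u'''(x;B) < 0 for all x ∈ [0,∞) and u'''(x;B) → −∞ as x → ∞; (ii) u''(x;B) < 0 and u''(·;B) is strictly decreasing on [0,∞), with u''(x;B) → −∞ as x → ∞; (iii) u'(·;B) is strictly decreasing on [0,∞) with u'(x;B) → −∞ as x → ∞, so u'(·;B) has a unique zero z₁ ∈ (0,∞); and (iv) u(·;B) attains its unique maximum over [0,∞) at x = z₁, and u(x;B) → −∞ as x → ∞. -/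
open Real Set Filter
open scoped ContDiff

private lemma comp_le {f g f' g' : ℝ → ℝ} {X : ℝ}
    (hf : ∀ t, HasDerivAt f (f' t) t) (hg : ∀ t, HasDerivAt g (g' t) t)
    (h0 : f 0 ≤ g 0) (hle : ∀ t ∈ Ioo (0:ℝ) X, f' t ≤ g' t) :
    ∀ x ∈ Icc (0:ℝ) X, f x ≤ g x := by
  intro x hx
  have hcont : Continuous fun t => f t - g t :=
    continuous_iff_continuousAt.2 fun t => ((hf t).sub (hg t)).continuousAt
  have hmono : AntitoneOn (fun t => f t - g t) (Icc 0 X) := by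
    refine antitoneOn_of_deriv_nonpos (convex_Icc 0 X) hcont.continuousOn
      (fun t _ => ((hf t).sub (hg t)).differentiableAt.differentiableWithinAt) ?_
    intro t ht
    rw [interior_Icc] at ht
    rw [HasDerivAt.deriv (f := fun t => f t - g t) ((hf t).sub (hg t))]
    exact sub_nonpos.2 (hle t ht)
  have h0m : (0:ℝ) ∈ Icc (0:ℝ) X := ⟨le_refl 0, hx.1.trans hx.2⟩
  have hkey := hmono h0m hx hx.1
  simp only at hkey
  linarith

private lemma tendsto_aux (C c : ℝ) (hc : c < 0) {n : ℕ} (hn : n ≠ 0) :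
    Tendsto (fun x : ℝ => C + c * x ^ n) atTop atBot :=
  tendsto_atBot_add_const_left atTop C
    ((tendsto_const_mul_atBot_of_neg hc).2 (tendsto_pow_atTop hn))

set_option maxHeartbeats 2000000 in
/-- Part II of the proof of Lemma 1: for `B > 0` small, the solution `u` of
`u'''' = B u` with data `(γ₀, γ₁, γ₂, γ₃)` (`γ₀, γ₁ > 0`, `γ₂, γ₃ < 0`)
satisfies (i) `u''' < 0` on `[0, ∞)` with `u''' → -∞`; (ii) `u'' < 0` and
strictly decreasing on `[0, ∞)` with `u'' → -∞`; (iii) `u'` strictly decreasing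
on `[0, ∞)` with `u' → -∞`, hence `u'` has a unique zero `z₁ ∈ (0, ∞)`;
(iv) `u` attains its unique maximum over `[0, ∞)` at `z₁`, and `u → -∞`. -/
theorem stmt_11 (γ₀ γ₁ γ₂ γ₃ : ℝ)
    (h₀ : 0 < γ₀) (h₁ : 0 < γ₁) (h₂ : γ₂ < 0) (h₃ : γ₃ < 0) :
    ∃ Bf : ℝ, 0 < Bf ∧
      ∀ B : ℝ, 0 < B → B < Bf →
        ∀ u : ℝ → ℝ, ContDiff ℝ (⊤ : ℕ∞) u →
          (∀ x : ℝ, iteratedDeriv 4 u x = B * u x) →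
          u 0 = γ₀ → deriv u 0 = γ₁ →
          iteratedDeriv 2 u 0 = γ₂ → iteratedDeriv 3 u 0 = γ₃ →
          -- (i)
          (∀ x : ℝ, 0 ≤ x → iteratedDeriv 3 u x < 0) ∧
          Tendsto (iteratedDeriv 3 u) atTop atBot ∧
          -- (ii)
          (∀ x : ℝ, 0 ≤ x → iteratedDeriv 2 u x < 0) ∧
          StrictAntiOn (iteratedDeriv 2 u) (Ici 0) ∧
          Tendsto (iteratedDeriv 2 u) atTop atBot ∧
          -- (iii)
          StrictAntiOn (deriv u) (Ici 0) ∧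
          Tendsto (deriv u) atTop atBot ∧
          -- (iii) + (iv): unique zero z₁ of u', unique maximum of u at z₁
          (∃ z₁ : ℝ, 0 < z₁ ∧ deriv u z₁ = 0 ∧
            (∀ x : ℝ, 0 ≤ x → deriv u x = 0 → x = z₁) ∧
            (∀ x : ℝ, 0 ≤ x → x ≠ z₁ → u x < u z₁)) ∧
          Tendsto u atTop atBot := by
  -- the constants
  obtain ⟨ε, hε1, hεc⟩ : ∃ ε : ℝ, 1 ≤ ε ∧ (12*γ₀+6*γ₁)/(-γ₂) ≤ ε :=
    ⟨max 1 ((12*γ₀+6*γ₁)/(-γ₂)), le_max_left _ _, le_max_right _ _⟩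
  have hε0 : (0:ℝ) < ε := lt_of_lt_of_le one_pos hε1
  have hγ₂pos : (0:ℝ) < -γ₂ := by linarith
  have hεc' : 12*γ₀+6*γ₁ ≤ ε * (-γ₂) := by
    rw [div_le_iff₀ hγ₂pos] at hεc; linarith [hεc]
  have hcond : 12*γ₀ + 6*γ₁*ε + γ₂*ε^2 ≤ 0 := by nlinarith [hεc', hε1, h₀, h₁, hε0]
  obtain ⟨K, hKdef⟩ : ∃ K : ℝ, K = 12*γ₀*ε + 6*γ₁*ε^2 := ⟨_, rfl⟩
  have hK : 0 < K := by nlinarith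
  obtain ⟨M, hMdef⟩ : ∃ M : ℝ, M = K/12 := ⟨_, rfl⟩
  have hM : 0 < M := by rw [hMdef]; positivity
  refine ⟨(-γ₃)/(2*M), div_pos (by linarith) (by linarith), ?_⟩
  intro B hB hBlt u hu hODE hiv0 hiv1 hiv2 hiv3
  have hBM : B * M < -γ₃/2 := by
    have h := (lt_div_iff₀ (by linarith : (0:ℝ) < 2*M)).1 hBlt
    nlinarith [h, hM]
  -- master polynomial bound
  have hpoly : ∀ x : ℝ, 0 ≤ x → 12*γ₀*x + 6*γ₁*x^2 + γ₂*x^3 ≤ K := by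
    intro x hx
    have hx1 : x*ε^2 ≤ ε^3 + x^3 := by
      rcases le_or_gt x ε with h | h
      · nlinarith [pow_nonneg hx 3, sq_nonneg ε]
      · nlinarith [sq_nonneg (x - ε), mul_pos (mul_pos hε0 hε0) hε0]
    have hx2 : x^2*ε ≤ ε^3 + x^3 := by
      rcases le_or_gt x ε with h | h
      · nlinarith [sq_nonneg x, sq_nonneg ε]
      · nlinarith [sq_nonneg x]
    have h1 : 12*γ₀*(x*ε^2) ≤ 12*γ₀*(ε^3+x^3) :=
      mul_le_mul_of_nonneg_left hx1 (by linarith)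
    have h2 : 6*γ₁*ε*(x^2*ε) ≤ 6*γ₁*ε*(ε^3+x^3) :=
      mul_le_mul_of_nonneg_left hx2 (by positivity)
    have h3 : (12*γ₀ + 6*γ₁*ε + γ₂*ε^2)*x^3 ≤ 0 :=
      mul_nonpos_of_nonpos_of_nonneg hcond (pow_nonneg hx 3)
    have key : ε^2*(12*γ₀*x + 6*γ₁*x^2 + γ₂*x^3) ≤ ε^2*K := by
      rw [hKdef]; linarith only [h1, h2, h3]
    exact le_of_mul_le_mul_left key (by positivity)
  have hQle : ∀ x : ℝ, 0 ≤ x →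
      γ₀*x + γ₁*x^2/2 + γ₂*x^3/6 ≤ M + (γ₂/12)*x^3 := by
    intro x hx; have h := hpoly x hx; rw [hMdef]; linarith
  have hQM : ∀ x : ℝ, 0 ≤ x → γ₀*x + γ₁*x^2/2 + γ₂*x^3/6 ≤ M := by
    intro x hx
    have h1 := hQle x hx
    have h2 : (γ₂/12)*x^3 ≤ 0 :=
      mul_nonpos_of_nonpos_of_nonneg (by linarith) (pow_nonneg hx 3)
    linarith
  -- quadratic bound
  have hP : ∀ x : ℝ, 0 ≤ x →
      γ₀ + γ₁*x + γ₂*x^2/2 ≤ (γ₀ + γ₁^2/(-γ₂)) + (γ₂/4)*x^2 := by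
    intro x hx
    have hkey : (γ₁*x + (γ₂/4)*x^2) * (-γ₂) ≤ γ₁^2 := by
      nlinarith [sq_nonneg (γ₁ + γ₂*x/2)]
    have h2 : γ₁*x + (γ₂/4)*x^2 ≤ γ₁^2/(-γ₂) := (le_div_iff₀ hγ₂pos).2 hkey
    linarith
  -- derivative plumbing
  have hone : (1 : WithTop ℕ∞) ≤ ∞ := by exact_mod_cast le_top
  have hsm : ContDiff ℝ ∞ u := hu.of_le (by simp)
  have hs1 : ContDiff ℝ ∞ (deriv u) := (contDiff_infty_iff_deriv.mp hsm).2
  have hs2 : ContDiff ℝ ∞ (deriv (deriv u)) := (contDiff_infty_iff_deriv.mp hs1).2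
  have hs3 : ContDiff ℝ ∞ (deriv (deriv (deriv u))) :=
    (contDiff_infty_iff_deriv.mp hs2).2
  have hDu : ∀ t : ℝ, HasDerivAt u (deriv u t) t :=
    fun t => (hsm.differentiable (by simp) t).hasDerivAt
  have hD1 : ∀ t : ℝ, HasDerivAt (deriv u) (deriv (deriv u) t) t :=
    fun t => (hs1.differentiable (by simp) t).hasDerivAt
  have hD2 : ∀ t : ℝ, HasDerivAt (deriv (deriv u)) (deriv (deriv (deriv u)) t) t :=
    fun t => (hs2.differentiable (by simp) t).hasDerivAt
  have e2 : iteratedDeriv 2 u = deriv (deriv u) := by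
    rw [iteratedDeriv_succ, iteratedDeriv_one]
  have e3 : iteratedDeriv 3 u = deriv (deriv (deriv u)) := by
    rw [iteratedDeriv_succ, iteratedDeriv_succ, iteratedDeriv_one]
  have hODE' : ∀ t : ℝ, deriv (deriv (deriv (deriv u))) t = B * u t := by
    intro t
    have h : iteratedDeriv 4 u t = B * u t := hODE t
    rwa [iteratedDeriv_succ, e3] at h
  have hD3 : ∀ t : ℝ, HasDerivAt (deriv (deriv (deriv u))) (B * u t) t := by
    intro t
    have h := (hs3.differentiable (by simp) t).hasDerivAt
    rwa [hODE' t] at h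
  have hc2 : deriv (deriv u) 0 = γ₂ := by rw [← e2]; exact hiv2
  have hc3 : deriv (deriv (deriv u)) 0 = γ₃ := by rw [← e3]; exact hiv3
  -- polynomial HasDerivAt facts
  have hgL : ∀ t : ℝ, HasDerivAt (fun s : ℝ => γ₁ + γ₂*s) γ₂ t := by
    intro t
    simpa using ((hasDerivAt_id t).const_mul γ₂).const_add γ₁
  have hgP : ∀ t : ℝ, HasDerivAt (fun s : ℝ => γ₀ + γ₁*s + γ₂*s^2/2) (γ₁ + γ₂*t) t := by
    intro t
    have h := (((hasDerivAt_id t).const_mul γ₁).const_add γ₀).add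
      (((hasDerivAt_pow 2 t).const_mul γ₂).div_const 2)
    exact h.congr_deriv (by push_cast; ring)
  have hgQ : ∀ t : ℝ, HasDerivAt
      (fun s : ℝ => γ₃ + B*(γ₀*s + γ₁*s^2/2 + γ₂*s^3/6))
      (B*(γ₀ + γ₁*t + γ₂*t^2/2)) t := by
    intro t
    have h := ((((hasDerivAt_id t).const_mul γ₀).add
        (((hasDerivAt_pow 2 t).const_mul γ₁).div_const 2)).add
        (((hasDerivAt_pow 3 t).const_mul γ₂).div_const 6)).const_mul B |>.const_add γ₃
    exact h.congr_deriv (by push_cast; ring)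
  have hgE : ∀ t : ℝ, HasDerivAt (fun s : ℝ => γ₂ + (γ₃/2)*s) (γ₃/2) t := by
    intro t
    simpa using ((hasDerivAt_id t).const_mul (γ₃/2)).const_add γ₂
  -- the chain on an interval [0, X] given d3 < 0 on (0, X)
  have chain : ∀ X : ℝ, (∀ t ∈ Ioo (0:ℝ) X, deriv (deriv (deriv u)) t < 0) →
      (∀ x ∈ Icc (0:ℝ) X, deriv (deriv u) x ≤ γ₂) ∧
      (∀ x ∈ Icc (0:ℝ) X, deriv u x ≤ γ₁ + γ₂*x) ∧
      (∀ x ∈ Icc (0:ℝ) X, u x ≤ γ₀ + γ₁*x + γ₂*x^2/2) ∧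
      (∀ x ∈ Icc (0:ℝ) X, deriv (deriv (deriv u)) x ≤
        γ₃ + B*(γ₀*x + γ₁*x^2/2 + γ₂*x^3/6)) := by
    intro X hneg
    have s1 : ∀ x ∈ Icc (0:ℝ) X, deriv (deriv u) x ≤ γ₂ := by
      have := comp_le hD2 (fun t => hasDerivAt_const t γ₂)
        (by rw [hc2]) (fun t ht => (hneg t ht).le)
      simpa using this
    have s2 : ∀ x ∈ Icc (0:ℝ) X, deriv u x ≤ γ₁ + γ₂*x := by
      have := comp_le hD1 hgL (by rw [hiv1]; simp)
        (fun t ht => s1 t ⟨ht.1.le, ht.2.le⟩)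
      simpa using this
    have s3 : ∀ x ∈ Icc (0:ℝ) X, u x ≤ γ₀ + γ₁*x + γ₂*x^2/2 := by
      have := comp_le hDu hgP (by rw [hiv0]; simp)
        (fun t ht => s2 t ⟨ht.1.le, ht.2.le⟩)
      simpa using this
    have s4 : ∀ x ∈ Icc (0:ℝ) X, deriv (deriv (deriv u)) x ≤
        γ₃ + B*(γ₀*x + γ₁*x^2/2 + γ₂*x^3/6) := by
      have := comp_le hD3 hgQ (by rw [hc3]; simp)
        (fun t ht => mul_le_mul_of_nonneg_left (s3 t ⟨ht.1.le, ht.2.le⟩) hB.le)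
      simpa using this
    exact ⟨s1, s2, s3, s4⟩
  -- bootstrap: d3 < 0 on [0, ∞)
  have hd3neg : ∀ x : ℝ, 0 ≤ x → deriv (deriv (deriv u)) x < 0 := by
    by_contra hcon
    push_neg at hcon
    obtain ⟨x₀, hx₀0, hx₀⟩ := hcon
    have hx₀' : 0 ≤ deriv (deriv (deriv u)) x₀ := hx₀
    set A : Set ℝ := {x | 0 ≤ x ∧ 0 ≤ deriv (deriv (deriv u)) x} with hAdef
    have hA_ne : A.Nonempty := ⟨x₀, hx₀0, hx₀'⟩
    have hA_bdd : BddBelow A := ⟨0, fun y hy => hy.1⟩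
    have hd3cont : Continuous (deriv (deriv (deriv u))) :=
      continuous_iff_continuousAt.2 fun t => (hD3 t).continuousAt
    have hA_closed : IsClosed A := by
      have : A = Ici 0 ∩ (deriv (deriv (deriv u))) ⁻¹' (Ici 0) := by
        ext y; simp [hAdef, mem_Ici]
      rw [this]
      exact isClosed_Ici.inter (isClosed_Ici.preimage hd3cont)
    set T := sInf A with hTdef
    have hTA : T ∈ A := hA_closed.csInf_mem hA_ne hA_bdd
    have hT0 : 0 ≤ T := hTA.1
    have hTneg : ∀ t ∈ Ioo (0:ℝ) T, deriv (deriv (deriv u)) t < 0 := by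
      intro t ht
      by_contra h'
      push_neg at h'
      exact absurd (csInf_le hA_bdd ⟨ht.1.le, h'⟩) (not_le.2 ht.2)
    obtain ⟨_, _, _, s4⟩ := chain T hTneg
    have h4 := s4 T ⟨hT0, le_refl T⟩
    have hQT := hQM T hT0
    have : B*(γ₀*T + γ₁*T^2/2 + γ₂*T^3/6) ≤ B*M := mul_le_mul_of_nonneg_left hQT hB.le
    have hcontr : deriv (deriv (deriv u)) T < 0 := by linarith [hTA.2]
    linarith [hTA.2]
  -- global bounds
  have hchainAll := fun (x : ℝ) => chain x (fun t ht => hd3neg t ht.1.le)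
  have g2 : ∀ x : ℝ, 0 ≤ x → deriv (deriv u) x ≤ γ₂ :=
    fun x hx => (hchainAll x).1 x ⟨hx, le_refl x⟩
  have g1 : ∀ x : ℝ, 0 ≤ x → deriv u x ≤ γ₁ + γ₂*x :=
    fun x hx => (hchainAll x).2.1 x ⟨hx, le_refl x⟩
  have gu : ∀ x : ℝ, 0 ≤ x → u x ≤ γ₀ + γ₁*x + γ₂*x^2/2 :=
    fun x hx => (hchainAll x).2.2.1 x ⟨hx, le_refl x⟩
  have g3 : ∀ x : ℝ, 0 ≤ x → deriv (deriv (deriv u)) x ≤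
      γ₃ + B*(γ₀*x + γ₁*x^2/2 + γ₂*x^3/6) :=
    fun x hx => (hchainAll x).2.2.2 x ⟨hx, le_refl x⟩
  have g3half : ∀ x : ℝ, 0 ≤ x → deriv (deriv (deriv u)) x ≤ γ₃/2 := by
    intro x hx
    have h1 := g3 x hx
    have h2 : B*(γ₀*x + γ₁*x^2/2 + γ₂*x^3/6) ≤ B*M :=
      mul_le_mul_of_nonneg_left (hQM x hx) hB.le
    linarith
  have g2' : ∀ x : ℝ, 0 ≤ x → deriv (deriv u) x ≤ γ₂ + (γ₃/2)*x := by
    intro x hx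
    have h := comp_le (X := x) hD2 hgE (by rw [hc2]; simp)
      (fun t ht => g3half t ht.1.le)
    simpa using h x ⟨hx, le_refl x⟩
  have g3'' : ∀ x : ℝ, 0 ≤ x → deriv (deriv (deriv u)) x ≤
      (γ₃ + B*M) + (B*γ₂/12)*x^3 := by
    intro x hx
    have h1 := g3 x hx
    have h2 : B*(γ₀*x + γ₁*x^2/2 + γ₂*x^3/6) ≤ B*(M + (γ₂/12)*x^3) :=
      mul_le_mul_of_nonneg_left (hQle x hx) hB.le
    nlinarith [h1, h2]
  -- continuity facts
  have hcu : Continuous u := continuous_iff_continuousAt.2 fun t => (hDu t).continuousAt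
  have hc1 : Continuous (deriv u) :=
    continuous_iff_continuousAt.2 fun t => (hD1 t).continuousAt
  have hcd2 : Continuous (deriv (deriv u)) :=
    continuous_iff_continuousAt.2 fun t => (hD2 t).continuousAt
  -- strict antitonicity
  have santi2 : StrictAntiOn (deriv (deriv u)) (Ici 0) := by
    refine strictAntiOn_of_deriv_neg (convex_Ici 0) hcd2.continuousOn ?_
    intro t ht
    rw [interior_Ici] at ht
    rw [(hD2 t).deriv]
    exact hd3neg t ht.le
  have santi1 : StrictAntiOn (deriv u) (Ici 0) := by
    refine strictAntiOn_of_deriv_neg (convex_Ici 0) hc1.continuousOn ?_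
    intro t ht
    rw [interior_Ici] at ht
    rw [(hD1 t).deriv]
    exact lt_of_le_of_lt (g2 t ht.le) h₂
  -- zero of u'
  obtain ⟨X, hXdef⟩ : ∃ X : ℝ, X = (γ₁+1)/(-γ₂) := ⟨_, rfl⟩
  have hX0 : 0 < X := by rw [hXdef]; exact div_pos (by linarith) hγ₂pos
  have hd1X : deriv u X < 0 := by
    have h1 := g1 X hX0.le
    have h2 : γ₂ * X = -(γ₁+1) := by
      rw [hXdef]; field_simp [h₂.ne]
    rw [h2] at h1; linarith
  obtain ⟨z₁, hz₁mem, hz₁⟩ := intermediate_value_Icc' hX0.le hc1.continuousOn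
    (⟨hd1X.le, by rw [hiv1]; exact h₁.le⟩ : (0:ℝ) ∈ Icc (deriv u X) (deriv u 0))
  have hz₁pos : 0 < z₁ := by
    rcases eq_or_lt_of_le hz₁mem.1 with h | h
    · exfalso; rw [← h] at hz₁; rw [hiv1] at hz₁; linarith
    · exact h
  -- assemble
  rw [e2, e3]
  refine ⟨hd3neg, ?_, ?_, santi2, ?_, santi1, ?_, ?_, ?_⟩
  · -- d3 → -∞
    refine tendsto_atBot_mono' atTop ?_
      (tendsto_aux (γ₃ + B*M) (B*γ₂/12) (by nlinarith) (by norm_num : (3:ℕ) ≠ 0))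
    filter_upwards [eventually_ge_atTop (0:ℝ)] with x hx using g3'' x hx
  · -- d2 < 0
    exact fun x hx => lt_of_le_of_lt (g2 x hx) h₂
  · -- d2 → -∞
    refine tendsto_atBot_mono' atTop ?_
      (tendsto_aux γ₂ (γ₃/2) (by linarith) (by norm_num : (1:ℕ) ≠ 0))
    filter_upwards [eventually_ge_atTop (0:ℝ)] with x hx
    simpa [pow_one] using g2' x hx
  · -- d1 → -∞
    refine tendsto_atBot_mono' atTop ?_
      (tendsto_aux γ₁ γ₂ h₂ (by norm_num : (1:ℕ) ≠ 0))
    filter_upwards [eventually_ge_atTop (0:ℝ)] with x hx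
    simpa [pow_one] using g1 x hx
  · -- unique zero and unique max
    refine ⟨z₁, hz₁pos, hz₁, ?_, ?_⟩
    · intro x hx hdx
      exact santi1.injOn (mem_Ici.2 hx) (mem_Ici.2 hz₁pos.le) (by rw [hdx, hz₁])
    · intro x hx hne
      rcases lt_or_gt_of_ne hne with hlt | hgt
      · have smono : StrictMonoOn u (Icc 0 z₁) := by
          refine strictMonoOn_of_deriv_pos (convex_Icc 0 z₁) hcu.continuousOn ?_
          intro t ht
          rw [interior_Icc] at ht
          rw [(hDu t).deriv] at *
          have := santi1 (mem_Ici.2 ht.1.le) (mem_Ici.2 hz₁pos.le) ht.2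
          rw [hz₁] at this
          exact this
        exact smono ⟨hx, hlt.le⟩ ⟨hz₁pos.le, le_refl z₁⟩ hlt
      · have santu : StrictAntiOn u (Ici z₁) := by
          refine strictAntiOn_of_deriv_neg (convex_Ici z₁) hcu.continuousOn ?_
          intro t ht
          rw [interior_Ici] at ht
          rw [(hDu t).deriv] at *
          have := santi1 (mem_Ici.2 hz₁pos.le) (mem_Ici.2 (hz₁pos.le.trans ht.le)) ht
          rw [hz₁] at this
          exact this
        exact santu (self_mem_Ici) (mem_Ici.2 hgt.le) hgt
  · -- u → -∞
    refine tendsto_atBot_mono' atTop ?_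
      (tendsto_aux (γ₀ + γ₁^2/(-γ₂)) (γ₂/4) (by linarith) (by norm_num : (2:ℕ) ≠ 0))
    filter_upwards [eventually_ge_atTop (0:ℝ)] with x hx
    exact (gu x hx).trans (hP x hx)
end
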